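/- arXiv:1501.02850 — 7 statements merged into one kernel-verified Lean document; each statement's English description precedes it below -/
import Mathlib

section
/- Let u_n be a sequence of a.e. finite functions on Λ and U_n := G_{1,N}(u_n) their generalized N-means. There exists an a.e. finite function U on Λ^N with U_n → U a.e. on Λ^N if and only if there exists an a.e. finite function u on Λ with u_n → u a.e. on Λ; and in that case U = G_{1,N}(u) a.e. -/
/-! If the sums `∑ i, u n (x i)` converge for a.e. `x ∈ Λ^N`, Fubini on `Λ × Λ^(N-1)` yields
a point `z` of `Λ^(N-1)` such that `u n y + c n` converges for a.e. `y`, where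
`c n = ∑ j, u n (z j)`. Evaluating at a point `x` all of whose coordinates are such `y`, and at
which the sums converge, shows that `N * c n`, hence `c n`, converges; so `u n y` converges
for a.e. `y`. -/

open MeasureTheory Filter Topology

instance MeasureTheory.Measure.pi.neZero {ι : Type*} [Fintype ι] {α : ι → Type*}
    [∀ i, MeasurableSpace (α i)] (μ : ∀ i, Measure (α i)) [∀ i, SigmaFinite (μ i)]
    [∀ i, NeZero (μ i)] : NeZero (Measure.pi μ) :=
  ⟨fun h => by
    simpa [Measure.pi_univ, Finset.prod_eq_zero_iff, NeZero.ne] using congrArg (· Set.univ) h⟩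

theorem exists_tendsto_const_mul_iff {α : Type*} {l : Filter α} {f : α → ℝ} {c : ℝ}
    (hc : c ≠ 0) :
    (∃ L, Tendsto (fun n => c * f n) l (𝓝 L)) ↔ ∃ L, Tendsto f l (𝓝 L) :=
  ⟨fun ⟨L, h⟩ => ⟨c⁻¹ * L, by simpa [← mul_assoc, hc] using h.const_mul c⁻¹⟩,
    fun ⟨L, h⟩ => ⟨c * L, h.const_mul c⟩⟩

section

variable {Λ : Type*} [MeasurableSpace Λ] {μ : Measure Λ} [SigmaFinite μ]
  {u : ℕ → Λ → ℝ}

theorem ae_forall_pi_of_ae {ι : Type*} [Fintype ι] {p : Λ → Prop} (h : ∀ᵐ y ∂μ, p y) :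
    ∀ᵐ x ∂(Measure.pi fun _ : ι => μ), ∀ i, p (x i) :=
  ae_all_iff.mpr fun _ => Measure.tendsto_eval_ae_ae.eventually h

theorem ae_tendsto_sum_of_ae_tendsto {ι : Type*} [Fintype ι] {v : Λ → ℝ}
    (hv : ∀ᵐ y ∂μ, Tendsto (fun n => u n y) atTop (𝓝 (v y))) :
    ∀ᵐ x ∂(Measure.pi fun _ : ι => μ),
      Tendsto (fun n => ∑ i, u n (x i)) atTop (𝓝 (∑ i, v (x i))) := by
  filter_upwards [ae_forall_pi_of_ae hv] with x hx
  exact tendsto_finsetSum _ fun i _ => hx i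

theorem exists_ae_exists_tendsto_add_of_ae_exists_tendsto_sum [NeZero μ] {m : ℕ}
    (hS : ∀ᵐ x ∂(Measure.pi fun _ : Fin (m + 1) => μ),
      ∃ L, Tendsto (fun n => ∑ i, u n (x i)) atTop (𝓝 L)) :
    ∃ c : ℕ → ℝ, ∀ᵐ y ∂μ, ∃ L, Tendsto (fun n => u n y + c n) atTop (𝓝 L) := by
  have hsplit := measurePreserving_piFinSuccAbove (fun _ : Fin (m + 1) => μ) 0
  have hprod : ∀ᵐ p ∂μ.prod (Measure.pi fun _ : Fin m => μ),
      ∃ L, Tendsto (fun n => u n p.1 + ∑ j, u n (p.2 j)) atTop (𝓝 L) := by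
    filter_upwards [hsplit.symm.quasiMeasurePreserving.ae hS] with p hp
    simpa [MeasurableEquiv.piFinSuccAbove, Fin.sum_univ_succ] using hp
  have hswap := Measure.measurePreserving_swap.quasiMeasurePreserving.ae hprod
  obtain ⟨z, hz⟩ := (Measure.ae_ae_of_ae_prod hswap).exists
  exact ⟨fun n => ∑ j, u n (z j), hz⟩

theorem exists_tendsto_of_ae_exists_tendsto_add {ι : Type*} [Fintype ι] [Nonempty ι]
    [NeZero μ] {c : ℕ → ℝ}
    (hc : ∀ᵐ y ∂μ, ∃ L, Tendsto (fun n => u n y + c n) atTop (𝓝 L))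
    (hS : ∀ᵐ x ∂(Measure.pi fun _ : ι => μ),
      ∃ L, Tendsto (fun n => ∑ i, u n (x i)) atTop (𝓝 L)) :
    ∃ C, Tendsto c atTop (𝓝 C) := by
  obtain ⟨x, ⟨S, hxS⟩, hxc⟩ := (hS.and (ae_forall_pi_of_ae hc)).exists
  choose L hL using hxc
  have hsum : ∀ n,
      ∑ i, (u n (x i) + c n) - ∑ i, u n (x i) = (Fintype.card ι : ℝ) * c n := by
    simp [Finset.sum_add_distrib]
  have hcard : (Fintype.card ι : ℝ) ≠ 0 := Nat.cast_ne_zero.mpr Fintype.card_ne_zero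
  refine (exists_tendsto_const_mul_iff hcard).mp ⟨∑ i, L i - S, ?_⟩
  simpa only [hsum] using (tendsto_finsetSum Finset.univ fun i _ => hL i).sub hxS

theorem exists_ae_tendsto_of_ae_exists_tendsto_sum [NeZero μ] {m : ℕ}
    (hS : ∀ᵐ x ∂(Measure.pi fun _ : Fin (m + 1) => μ),
      ∃ L, Tendsto (fun n => ∑ i, u n (x i)) atTop (𝓝 L)) :
    ∃ v : Λ → ℝ, ∀ᵐ y ∂μ, Tendsto (fun n => u n y) atTop (𝓝 (v y)) := by
  obtain ⟨c, hc⟩ := exists_ae_exists_tendsto_add_of_ae_exists_tendsto_sum hS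
  obtain ⟨C, hC⟩ := exists_tendsto_of_ae_exists_tendsto_add hc hS
  refine ⟨fun y => limUnder atTop fun n => u n y, ?_⟩
  filter_upwards [hc] with y ⟨L, hL⟩
  exact tendsto_nhds_limUnder ⟨L - C, by simpa using hL.sub hC⟩

end

theorem gmean_one_ae_tendsto_iff_general {Λ : Type*} [MeasurableSpace Λ] (μ : Measure Λ)
    [SigmaFinite μ] (hμ : μ ≠ 0) (N : ℕ) (hN : 1 ≤ N)
    (u : ℕ → Λ → ℝ) :
    ((∃ U : (Fin N → Λ) → ℝ, ∀ᵐ x ∂(Measure.pi fun _ : Fin N => μ),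
        Tendsto (fun n => (N : ℝ)⁻¹ * ∑ i, u n (x i)) atTop (nhds (U x))) ↔
      (∃ v : Λ → ℝ, ∀ᵐ y ∂μ, Tendsto (fun n => u n y) atTop (nhds (v y)))) ∧
    ∀ U : (Fin N → Λ) → ℝ, ∀ v : Λ → ℝ,
      (∀ᵐ x ∂(Measure.pi fun _ : Fin N => μ),
        Tendsto (fun n => (N : ℝ)⁻¹ * ∑ i, u n (x i)) atTop (nhds (U x))) →
      (∀ᵐ y ∂μ, Tendsto (fun n => u n y) atTop (nhds (v y))) →
      U =ᵐ[Measure.pi fun _ : Fin N => μ] fun x => (N : ℝ)⁻¹ * ∑ i, v (x i) := by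
  have : NeZero μ := ⟨hμ⟩
  refine ⟨⟨?_, ?_⟩, ?_⟩
  · rintro ⟨U, hU⟩
    obtain ⟨m, rfl⟩ := Nat.exists_eq_add_one.mpr hN
    refine exists_ae_tendsto_of_ae_exists_tendsto_sum (hU.mono fun x hx => ?_)
    exact (exists_tendsto_const_mul_iff (by positivity)).mp ⟨_, hx⟩
  · rintro ⟨v, hv⟩
    exact ⟨fun x => (N : ℝ)⁻¹ * ∑ i, v (x i),
      (ae_tendsto_sum_of_ae_tendsto hv).mono fun x hx => hx.const_mul _⟩
  · intro U v hU hv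
    filter_upwards [hU, ae_tendsto_sum_of_ae_tendsto hv] with x hU hv
    exact tendsto_nhds_unique hU (hv.const_mul _)

/-- Lemma 2: for `m = 1`, the sequence of generalized `N`-means
`U_n = G_{1,N}(u_n)` has an a.e. finite a.e. limit `U` if and only if the kernels
`u_n` have an a.e. finite a.e. limit `u`; and in that case `U = G_{1,N}(u)` a.e. -/
theorem gmean_one_ae_tendsto_iff {Λ : Type*} [MeasurableSpace Λ] (μ : Measure Λ)
    [SigmaFinite μ] [μ.IsComplete] (hμ : μ ≠ 0) (N : ℕ) (hN : 1 ≤ N)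
    (u : ℕ → Λ → ℝ) :
    ((∃ U : (Fin N → Λ) → ℝ, ∀ᵐ x ∂(Measure.pi fun _ : Fin N => μ),
        Tendsto (fun n => (N : ℝ)⁻¹ * ∑ i, u n (x i)) atTop (nhds (U x))) ↔
      (∃ v : Λ → ℝ, ∀ᵐ y ∂μ, Tendsto (fun n => u n y) atTop (nhds (v y)))) ∧
    ∀ U : (Fin N → Λ) → ℝ, ∀ v : Λ → ℝ,
      (∀ᵐ x ∂(Measure.pi fun _ : Fin N => μ),
        Tendsto (fun n => (N : ℝ)⁻¹ * ∑ i, u n (x i)) atTop (nhds (U x))) →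
      (∀ᵐ y ∂μ, Tendsto (fun n => u n y) atTop (nhds (v y))) →
      U =ᵐ[Measure.pi fun _ : Fin N => μ] fun x => (N : ℝ)⁻¹ * ∑ i, v (x i) :=
  gmean_one_ae_tendsto_iff_general μ hμ N hN u
end

section
/- Let 1 ≤ m ≤ N and let u_n be a sequence of a.e. finite functions on Λ^m with U_n := G_{m,N}(u_n). There exists an a.e. finite function U on Λ^N with U_n → U a.e. if and only if there exists an a.e. finite function u on Λ^m with u_n → u a.e. on Λ^m; and in that case U = G_{m,N}(u) a.e. -/
open MeasureTheory Filter

/-- The generalized `N`-mean of order `m` with kernel `u`: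
`G_{m,N}(u)(x₁,...,x_N) = binom(N,m)⁻¹ ∑_{1 ≤ i₁ < ⋯ < i_m ≤ N} u(x_{i₁},...,x_{i_m})`. -/
noncomputable def gmean {Λ : Type*} (m N : ℕ) (u : (Fin m → Λ) → ℝ)
    (x : Fin N → Λ) : ℝ :=
  (N.choose m : ℝ)⁻¹ *
    ∑ s ∈ (Finset.powersetCard m (Finset.univ : Finset (Fin N))).attach,
      u fun i => x (s.1.orderEmbOfFin (Finset.mem_powersetCard.mp s.2).2 i)


/-- An upper-triangular linear system with nonzero diagonal entries is solvable. -/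
lemma tri_solve (m : ℕ) (a : ℕ → ℕ → ℝ) (b : ℕ → ℝ) (ha : ∀ k, k ≤ m → a k k ≠ 0) :
    ∃ f : ℕ → ℝ, ∀ k, k ≤ m → ∑ j ∈ Finset.Icc k m, a k j * f j = b k := by
  suffices h : ∀ c : ℕ, ∃ f : ℕ → ℝ, ∀ k, k ≤ m → m ≤ k + c →
      ∑ j ∈ Finset.Icc k m, a k j * f j = b k by
    obtain ⟨f, hf⟩ := h m
    exact ⟨f, fun k hk => hf k hk (by omega)⟩
  intro c
  induction c with
  | zero =>
    refine ⟨fun _ => b m / a m m, fun k hk hmk => ?_⟩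
    have hkm : k = m := by omega
    subst hkm
    rw [Finset.Icc_self, Finset.sum_singleton, mul_comm,
      div_mul_cancel₀ _ (ha k le_rfl)]
  | succ c ih =>
    obtain ⟨f, hf⟩ := ih
    by_cases hc : m ≤ c
    · exact ⟨f, fun k hk h2 => hf k hk (by omega)⟩
    · set k₀ := m - (c + 1) with hk₀
      refine ⟨Function.update f k₀
        ((b k₀ - ∑ j ∈ Finset.Icc (k₀ + 1) m, a k₀ j * f j) / a k₀ k₀), fun k hk h2 => ?_⟩
      rcases eq_or_lt_of_le (show k₀ ≤ k by omega) with he | hlt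
      · subst he
        have hm : k₀ ≤ m := by omega
        have hsplit : Finset.Icc k₀ m = insert k₀ (Finset.Icc (k₀ + 1) m) := by
          ext j; simp only [Finset.mem_Icc, Finset.mem_insert]; omega
        rw [hsplit, Finset.sum_insert (by simp)]
        have htail : ∑ j ∈ Finset.Icc (k₀ + 1) m, a k₀ j *
            Function.update f k₀ ((b k₀ - ∑ j ∈ Finset.Icc (k₀ + 1) m, a k₀ j * f j) / a k₀ k₀) j
            = ∑ j ∈ Finset.Icc (k₀ + 1) m, a k₀ j * f j := by
          refine Finset.sum_congr rfl fun j hj => ?_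
          have : j ≠ k₀ := by
            have := Finset.mem_Icc.mp hj; omega
          rw [Function.update_of_ne this]
        rw [htail, Function.update_self, mul_div_cancel₀ _ (ha _ hm)]
        ring
      · have : ∑ j ∈ Finset.Icc k m, a k j *
            Function.update f k₀ ((b k₀ - ∑ j ∈ Finset.Icc (k₀ + 1) m, a k₀ j * f j) / a k₀ k₀) j
            = ∑ j ∈ Finset.Icc k m, a k j * f j := by
          refine Finset.sum_congr rfl fun j hj => ?_
          have : j ≠ k₀ := by
            have := Finset.mem_Icc.mp hj; omega
          rw [Function.update_of_ne this]
        rw [this]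
        exact hf k hk (by omega)


/-- Counting subsets of `X` of size `r` whose intersection with `Y` has size `i`. -/
lemma card_filter_inter {ι : Type*} [DecidableEq ι] (X Y : Finset ι) (r i : ℕ) (hir : i ≤ r) :
    ((Finset.powersetCard r X).filter fun B => (B ∩ Y).card = i).card
      = (X ∩ Y).card.choose i * (X \ Y).card.choose (r - i) := by
  rw [← Finset.card_powersetCard, ← Finset.card_powersetCard, ← Finset.card_product]
  refine Finset.card_bij' (fun B _ => (B ∩ Y, B \ Y)) (fun p _ => p.1 ∪ p.2) ?_ ?_ ?_ ?_
  · rintro B hB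
    rw [Finset.mem_filter, Finset.mem_powersetCard] at hB
    obtain ⟨⟨hBX, hBr⟩, hBi⟩ := hB
    rw [Finset.mem_product, Finset.mem_powersetCard, Finset.mem_powersetCard]
    have hsd : (B ∩ Y).card + (B \ Y).card = B.card := Finset.card_inter_add_card_sdiff B Y
    refine ⟨⟨Finset.inter_subset_inter_right hBX, hBi⟩,
      ⟨Finset.sdiff_subset_sdiff hBX le_rfl, ?_⟩⟩
    dsimp only at *
    omega
  · rintro ⟨C, D⟩ hp
    rw [Finset.mem_product, Finset.mem_powersetCard, Finset.mem_powersetCard] at hp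
    obtain ⟨⟨hC, hCc⟩, hD, hDc⟩ := hp
    dsimp only at hC hCc hD hDc
    rw [Finset.mem_filter, Finset.mem_powersetCard]
    have hCY : C ⊆ Y := hC.trans Finset.inter_subset_right
    have hDY : Disjoint D Y := Finset.disjoint_left.mpr fun a haD =>
      (Finset.mem_sdiff.mp (hD haD)).2
    have hCD : Disjoint C D := Finset.disjoint_left.mpr fun a haC haD =>
      (Finset.mem_sdiff.mp (hD haD)).2 (hCY haC)
    have hUY : (C ∪ D) ∩ Y = C := by
      ext a
      simp only [Finset.mem_inter, Finset.mem_union]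
      constructor
      · rintro ⟨h1 | h1, h2⟩
        · exact h1
        · exact absurd h2 (Finset.disjoint_left.mp hDY h1)
      · exact fun h => ⟨Or.inl h, hCY h⟩
    refine ⟨⟨Finset.union_subset (hC.trans Finset.inter_subset_left)
        (hD.trans Finset.sdiff_subset), ?_⟩, by rw [hUY, hCc]⟩
    rw [Finset.card_union_of_disjoint hCD]
    omega
  · intro B hB
    exact sup_inf_sdiff B Y
  · rintro ⟨C, D⟩ hp
    rw [Finset.mem_product, Finset.mem_powersetCard, Finset.mem_powersetCard] at hp
    obtain ⟨⟨hC, hCc⟩, hD, hDc⟩ := hp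
    dsimp only at hC hCc hD hDc
    have hCY : C ⊆ Y := hC.trans Finset.inter_subset_right
    have hDY : Disjoint D Y := Finset.disjoint_left.mpr fun a haD =>
      (Finset.mem_sdiff.mp (hD haD)).2
    have h1 : (C ∪ D) ∩ Y = C := by
      ext a
      simp only [Finset.mem_inter, Finset.mem_union]
      constructor
      · rintro ⟨h1 | h1, h2⟩
        · exact h1
        · exact absurd h2 (Finset.disjoint_left.mp hDY h1)
      · exact fun h => ⟨Or.inl h, hCY h⟩
    have h2 : (C ∪ D) \ Y = D := by
      ext a
      simp only [Finset.mem_sdiff, Finset.mem_union]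
      constructor
      · rintro ⟨h1 | h1, h2⟩
        · exact absurd (hCY h1) h2
        · exact h1
      · exact fun h => ⟨Or.inr h, Finset.disjoint_left.mp hDY h⟩
    simp [h1, h2]

/-- Existence of an inverting system of coefficients for the inclusion matrix. -/
lemma exists_coeffs (m N : ℕ) (hmN : m ≤ N) (s₀ : Finset (Fin (N + m))) (hs₀ : s₀.card = m) :
    ∃ c : Finset (Fin (N + m)) → ℝ,
      ∀ s ∈ Finset.powersetCard m (Finset.univ : Finset (Fin (N + m))),
        ∑ A ∈ (Finset.powersetCard N (Finset.univ : Finset (Fin (N + m)))).filter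
            (fun A => s ⊆ A), c A
          = if s = s₀ then 1 else 0 := by
  classical
  set a : ℕ → ℕ → ℝ := fun k j => if j - k ≤ N - m then
      (((m - k).choose (j - k) * (N - m + k).choose (N - m - (j - k)) : ℕ) : ℝ) else 0 with haa
  set b : ℕ → ℝ := fun k => if k = m then 1 else 0 with hbb
  have hdiag : ∀ k, k ≤ m → a k k ≠ 0 := by
    intro k hk
    have h1 : (k : ℕ) - k = 0 := by omega
    simp only [haa, h1, Nat.zero_le, if_true, Nat.choose_zero_right, one_mul, Nat.sub_zero]
    exact_mod_cast (Nat.choose_pos (by omega : N - m ≤ N - m + k)).ne'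
  obtain ⟨f, hf⟩ := tri_solve m a b hdiag
  refine ⟨fun A => f ((A ∩ s₀).card), fun s hs => ?_⟩
  obtain ⟨-, hsc⟩ := Finset.mem_powersetCard.mp hs
  set k := (s ∩ s₀).card with hkdef
  have hk : k ≤ m := le_trans (Finset.card_le_card Finset.inter_subset_right) hs₀.le
  have hcards : (sᶜ ∩ s₀).card = m - k := by
    have h1 : (s₀ ∩ s).card + (s₀ \ s).card = s₀.card := Finset.card_inter_add_card_sdiff s₀ s
    have h2 : sᶜ ∩ s₀ = s₀ \ s := by
      ext x; simp [Finset.mem_sdiff, Finset.mem_compl, And.comm]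
    rw [h2]
    rw [Finset.inter_comm] at hkdef
    omega
  have hscompl : (sᶜ).card = N := by
    rw [Finset.card_compl, hsc, Fintype.card_fin]
    omega
  have hcards2 : (sᶜ \ s₀).card = N - m + k := by
    have h1 : (sᶜ ∩ s₀).card + (sᶜ \ s₀).card = (sᶜ).card :=
      Finset.card_inter_add_card_sdiff _ _
    omega
  -- step 1: change variables A = s ∪ B
  have h1 : ∑ A ∈ (Finset.powersetCard N (Finset.univ : Finset (Fin (N + m)))).filter
        (fun A => s ⊆ A), f ((A ∩ s₀).card)
      = ∑ B ∈ Finset.powersetCard (N - m) sᶜ, f (k + (B ∩ s₀).card) := by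
    refine Finset.sum_nbij' (fun A => A \ s) (fun B => s ∪ B) ?_ ?_ ?_ ?_ ?_
    · intro A hA
      rw [Finset.mem_filter, Finset.mem_powersetCard] at hA
      obtain ⟨⟨-, hAc⟩, hsA⟩ := hA
      rw [Finset.mem_powersetCard]
      constructor
      · intro x hx
        rw [Finset.mem_sdiff] at hx
        simp [Finset.mem_compl, hx.2]
      · rw [Finset.card_sdiff_of_subset hsA]; omega
    · intro B hB
      rw [Finset.mem_powersetCard] at hB
      obtain ⟨hBs, hBc⟩ := hB
      rw [Finset.mem_filter, Finset.mem_powersetCard]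
      have hdisj : Disjoint s B := Finset.disjoint_left.mpr fun x hx hxB =>
        (Finset.mem_compl.mp (hBs hxB)) hx
      refine ⟨⟨Finset.subset_univ _, ?_⟩, Finset.subset_union_left⟩
      rw [Finset.card_union_of_disjoint hdisj]
      omega
    · intro A hA
      rw [Finset.mem_filter] at hA
      exact Finset.union_sdiff_of_subset hA.2
    · intro B hB
      rw [Finset.mem_powersetCard] at hB
      have hdisj : Disjoint s B := Finset.disjoint_left.mpr fun x hx hxB =>
        (Finset.mem_compl.mp (hB.1 hxB)) hx
      rw [Finset.union_sdiff_cancel_left hdisj]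
    · intro A hA
      rw [Finset.mem_filter, Finset.mem_powersetCard] at hA
      congr 1
      have : A ∩ s₀ = (s ∩ s₀) ∪ ((A \ s) ∩ s₀) := by
        ext x
        simp only [Finset.mem_inter, Finset.mem_union, Finset.mem_sdiff]
        constructor
        · rintro ⟨hxA, hx0⟩
          by_cases hxs : x ∈ s
          · exact Or.inl ⟨hxs, hx0⟩
          · exact Or.inr ⟨⟨hxA, hxs⟩, hx0⟩
        · rintro (⟨hxs, hx0⟩ | ⟨⟨hxA, -⟩, hx0⟩)
          · exact ⟨hA.2 hxs, hx0⟩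
          · exact ⟨hxA, hx0⟩
      rw [this, Finset.card_union_of_disjoint]
      exact Finset.disjoint_left.mpr fun x hx hx' => by
        rw [Finset.mem_inter] at hx
        rw [Finset.mem_inter, Finset.mem_sdiff] at hx'
        exact hx'.1.2 hx.1
  rw [h1]
  -- step 2: fiberwise sum over i = (B ∩ s₀).card
  have hmaps : ∀ B ∈ Finset.powersetCard (N - m) sᶜ,
      (B ∩ s₀).card ∈ Finset.range (m - k + 1) := by
    intro B hB
    rw [Finset.mem_powersetCard] at hB
    rw [Finset.mem_range]
    have : (B ∩ s₀).card ≤ (sᶜ ∩ s₀).card :=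
      Finset.card_le_card (Finset.inter_subset_inter_right hB.1)
    omega
  rw [← Finset.sum_fiberwise_of_maps_to hmaps]
  -- step 3: compute each fiber
  have h3 : ∀ i ∈ Finset.range (m - k + 1),
      ∑ B ∈ (Finset.powersetCard (N - m) sᶜ).filter (fun B => (B ∩ s₀).card = i),
        f (k + (B ∩ s₀).card) = a k (k + i) * f (k + i) := by
    intro i hi
    rw [Finset.sum_congr rfl (fun B hB => by
      rw [(Finset.mem_filter.mp hB).2])]
    rw [Finset.sum_const, nsmul_eq_mul]
    congr 1
    by_cases hiNm : i ≤ N - m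
    · rw [card_filter_inter sᶜ s₀ (N - m) i hiNm, hcards, hcards2]
      simp only [haa]
      rw [if_pos (by omega : k + i - k ≤ N - m)]
      have : k + i - k = i := by omega
      rw [this]
    · have hempty : (Finset.powersetCard (N - m) sᶜ).filter
          (fun B => (B ∩ s₀).card = i) = ∅ := by
        rw [Finset.filter_eq_empty_iff]
        intro B hB
        rw [Finset.mem_powersetCard] at hB
        have : (B ∩ s₀).card ≤ B.card := Finset.card_le_card Finset.inter_subset_left
        omega
      rw [hempty]
      simp only [haa, Finset.card_empty, Nat.cast_zero]
      rw [if_neg (by omega : ¬ (k + i - k ≤ N - m))]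
  rw [Finset.sum_congr rfl h3]
  -- step 4: reindex and use the triangular solution
  have h4 : ∑ i ∈ Finset.range (m - k + 1), a k (k + i) * f (k + i)
      = ∑ j ∈ Finset.Icc k m, a k j * f j := by
    refine Finset.sum_nbij' (fun i => k + i) (fun j => j - k) ?_ ?_ ?_ ?_ ?_
    · intro i hi
      rw [Finset.mem_range] at hi
      rw [Finset.mem_Icc]
      omega
    · intro j hj
      rw [Finset.mem_Icc] at hj
      rw [Finset.mem_range]
      omega
    · intro i hi
      omega
    · intro j hj
      rw [Finset.mem_Icc] at hj
      omega
    · intro i hi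
      rfl
  rw [h4, hf k hk]
  -- step 5: identify the right-hand side
  simp only [hbb]
  congr 1
  simp only [eq_iff_iff]
  constructor
  · intro hkm
    have h5 : s ∩ s₀ = s := Finset.eq_of_subset_of_card_le Finset.inter_subset_left
      (by rw [← hkdef, hkm, hsc])
    have h6 : s ⊆ s₀ := by rw [← h5]; exact Finset.inter_subset_right
    exact Finset.eq_of_subset_of_card_le h6 (by omega)
  · intro hss
    subst hss
    rw [hkdef, Finset.inter_self, hs₀]


/-- Evaluation of a kernel `u` on the increasing enumeration of a subset, `0` if the size is
wrong. -/
noncomputable def subEval {Λ : Type*} {M : ℕ} (m : ℕ) (u : (Fin m → Λ) → ℝ) (x : Fin M → Λ)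
    (s : Finset (Fin M)) : ℝ :=
  if h : s.card = m then u (fun i => x (s.orderEmbOfFin h i)) else 0

lemma orderEmbOfFin_map_comp {M N m : ℕ} (A : Finset (Fin M)) (hA : A.card = N)
    (t : Finset (Fin N)) (ht : t.card = m) (h : (t.map (A.orderEmbOfFin hA).toEmbedding).card = m)
    (i : Fin m) :
    (t.map (A.orderEmbOfFin hA).toEmbedding).orderEmbOfFin h i
      = A.orderEmbOfFin hA (t.orderEmbOfFin ht i) := by
  have huniq := Finset.orderEmbOfFin_unique' h
      (f := (t.orderEmbOfFin ht).trans (A.orderEmbOfFin hA))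
      (fun j => Finset.mem_map_of_mem _ (Finset.orderEmbOfFin_mem t ht j))
  rw [← huniq]
  rfl

lemma map_powersetCard_orderEmbOfFin {M N m : ℕ} (hN : 1 ≤ N) (A : Finset (Fin M))
    (hA : A.card = N) :
    (Finset.powersetCard m (Finset.univ : Finset (Fin N))).map
        ⟨Finset.map (A.orderEmbOfFin hA).toEmbedding, Finset.map_injective _⟩
      = Finset.powersetCard m A := by
  have : Nonempty (Fin N) := ⟨⟨0, hN⟩⟩
  ext s
  simp only [Finset.mem_map, Finset.mem_powersetCard, Function.Embedding.coeFn_mk]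
  constructor
  · rintro ⟨t, ⟨-, htc⟩, rfl⟩
    refine ⟨?_, by rw [Finset.card_map, htc]⟩
    intro a ha
    rw [Finset.mem_map] at ha
    obtain ⟨i, -, rfl⟩ := ha
    exact Finset.orderEmbOfFin_mem A hA i
  · rintro ⟨hsA, hsc⟩
    set g := Function.invFun (A.orderEmbOfFin hA : Fin N → Fin M) with hg
    have hginv : ∀ a ∈ s, A.orderEmbOfFin hA (g a) = a := by
      intro a ha
      apply Function.invFun_eq
      have : a ∈ (A : Set (Fin M)) := hsA ha
      rw [← Finset.range_orderEmbOfFin A hA] at this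
      exact this
    refine ⟨s.image g, ⟨Finset.subset_univ _, ?_⟩, ?_⟩
    · rw [Finset.card_image_of_injOn, hsc]
      intro a ha b hb hab
      rw [← hginv a ha, ← hginv b hb, hab]
    · ext b
      simp only [Finset.mem_map, Finset.mem_image, Function.Embedding.coeFn_mk]
      constructor
      · rintro ⟨t, ⟨a, ha, rfl⟩, rfl⟩
        rwa [RelEmbedding.coe_toEmbedding, hginv a ha]
      · intro hb
        exact ⟨g b, ⟨b, hb, rfl⟩, hginv b hb⟩

lemma powersetCard_eq_filter_subset {M m : ℕ} (A : Finset (Fin M)) :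
    Finset.powersetCard m A
      = (Finset.powersetCard m (Finset.univ : Finset (Fin M))).filter (fun s => s ⊆ A) := by
  ext s
  simp only [Finset.mem_powersetCard, Finset.mem_filter]
  exact ⟨fun ⟨h1, h2⟩ => ⟨⟨Finset.subset_univ _, h2⟩, h1⟩, fun ⟨⟨_, h2⟩, h1⟩ => ⟨h1, h2⟩⟩

lemma gmean_comp {Λ : Type*} (m N M : ℕ) (hN : 1 ≤ N) (u : (Fin m → Λ) → ℝ)
    (x : Fin M → Λ) (A : Finset (Fin M)) (hA : A.card = N) :
    gmean m N u (fun i => x (A.orderEmbOfFin hA i))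
      = (N.choose m : ℝ)⁻¹ * ∑ s ∈ Finset.powersetCard m (Finset.univ : Finset (Fin M)),
          (if s ⊆ A then subEval m u x s else 0) := by
  unfold gmean
  congr 1
  have hterm : ∀ t : {t // t ∈ Finset.powersetCard m (Finset.univ : Finset (Fin N))},
      u (fun i => x (A.orderEmbOfFin hA ((t.1.orderEmbOfFin
          (Finset.mem_powersetCard.mp t.2).2) i)))
        = subEval m u x (t.1.map (A.orderEmbOfFin hA).toEmbedding) := by
    rintro ⟨t, ht⟩
    have htc : t.card = m := (Finset.mem_powersetCard.mp ht).2
    have hmc : (t.map (A.orderEmbOfFin hA).toEmbedding).card = m := by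
      rw [Finset.card_map, htc]
    rw [subEval, dif_pos hmc]
    congr 1
    funext i
    rw [orderEmbOfFin_map_comp A hA t htc hmc i]
  calc ∑ t ∈ (Finset.powersetCard m (Finset.univ : Finset (Fin N))).attach,
        u (fun i => x (A.orderEmbOfFin hA ((t.1.orderEmbOfFin
          (Finset.mem_powersetCard.mp t.2).2) i)))
      = ∑ t ∈ (Finset.powersetCard m (Finset.univ : Finset (Fin N))).attach,
          subEval m u x (t.1.map (A.orderEmbOfFin hA).toEmbedding) :=
        Finset.sum_congr rfl (fun t _ => hterm t)
    _ = ∑ t ∈ Finset.powersetCard m (Finset.univ : Finset (Fin N)),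
          subEval m u x (t.map (A.orderEmbOfFin hA).toEmbedding) :=
        Finset.sum_attach _ (fun t => subEval m u x (Finset.map (A.orderEmbOfFin hA).toEmbedding t))
    _ = ∑ s ∈ Finset.powersetCard m A, subEval m u x s := by
        rw [← map_powersetCard_orderEmbOfFin hN A hA, Finset.sum_map]
        rfl
    _ = ∑ s ∈ Finset.powersetCard m (Finset.univ : Finset (Fin M)),
          (if s ⊆ A then subEval m u x s else 0) := by
        rw [powersetCard_eq_filter_subset, Finset.sum_filter]

lemma gmean_extract {Λ : Type*} (m N : ℕ) (hm : 1 ≤ m) (hmN : m ≤ N)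
    (s₀ : Finset (Fin (N + m)))
    (hs₀ : s₀ ∈ Finset.powersetCard m (Finset.univ : Finset (Fin (N + m))))
    (c : Finset (Fin (N + m)) → ℝ)
    (hc : ∀ s ∈ Finset.powersetCard m (Finset.univ : Finset (Fin (N + m))),
      ∑ A ∈ (Finset.powersetCard N (Finset.univ : Finset (Fin (N + m)))).filter
          (fun A => s ⊆ A), c A = if s = s₀ then 1 else 0)
    (u : (Fin m → Λ) → ℝ) (x : Fin (N + m) → Λ) :
    ∑ A ∈ (Finset.powersetCard N (Finset.univ : Finset (Fin (N + m)))).attach,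
        ((N.choose m : ℝ) * c A.1) * gmean m N u
          (fun i => x (A.1.orderEmbOfFin (Finset.mem_powersetCard.mp A.2).2 i))
      = subEval m u x s₀ := by
  classical
  have hch : (N.choose m : ℝ) ≠ 0 := Nat.cast_ne_zero.2 (Nat.choose_pos hmN).ne'
  have hstep : ∀ A : {A // A ∈ Finset.powersetCard N (Finset.univ : Finset (Fin (N + m)))},
      ((N.choose m : ℝ) * c A.1) * gmean m N u
          (fun i => x (A.1.orderEmbOfFin (Finset.mem_powersetCard.mp A.2).2 i))
        = ∑ s ∈ Finset.powersetCard m (Finset.univ : Finset (Fin (N + m))),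
            (if s ⊆ A.1 then c A.1 * subEval m u x s else 0) := by
    intro A
    rw [gmean_comp m N (N + m) (le_trans hm hmN) u x A.1
      (Finset.mem_powersetCard.mp A.2).2]
    have hmul : ∀ S : ℝ, ((N.choose m : ℝ) * c A.1) * ((N.choose m : ℝ)⁻¹ * S)
        = c A.1 * S := by
      intro S
      field_simp
    rw [hmul, Finset.mul_sum]
    refine Finset.sum_congr rfl fun s _ => ?_
    rw [mul_ite, mul_zero]
  calc ∑ A ∈ (Finset.powersetCard N (Finset.univ : Finset (Fin (N + m)))).attach,
        ((N.choose m : ℝ) * c A.1) * gmean m N u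
          (fun i => x (A.1.orderEmbOfFin (Finset.mem_powersetCard.mp A.2).2 i))
      = ∑ A ∈ (Finset.powersetCard N (Finset.univ : Finset (Fin (N + m)))).attach,
          ∑ s ∈ Finset.powersetCard m (Finset.univ : Finset (Fin (N + m))),
            (if s ⊆ A.1 then c A.1 * subEval m u x s else 0) :=
        Finset.sum_congr rfl (fun A _ => hstep A)
    _ = ∑ A ∈ Finset.powersetCard N (Finset.univ : Finset (Fin (N + m))),
          ∑ s ∈ Finset.powersetCard m (Finset.univ : Finset (Fin (N + m))),
            (if s ⊆ A then c A * subEval m u x s else 0) :=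
        Finset.sum_attach _ (fun A => ∑ s ∈ Finset.powersetCard m
          (Finset.univ : Finset (Fin (N + m))), (if s ⊆ A then c A * subEval m u x s else 0))
    _ = ∑ s ∈ Finset.powersetCard m (Finset.univ : Finset (Fin (N + m))),
          ∑ A ∈ Finset.powersetCard N (Finset.univ : Finset (Fin (N + m))),
            (if s ⊆ A then c A * subEval m u x s else 0) := Finset.sum_comm
    _ = ∑ s ∈ Finset.powersetCard m (Finset.univ : Finset (Fin (N + m))),
          (∑ A ∈ (Finset.powersetCard N (Finset.univ : Finset (Fin (N + m)))).filter
            (fun A => s ⊆ A), c A) * subEval m u x s := by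
        refine Finset.sum_congr rfl fun s _ => ?_
        rw [Finset.sum_filter, Finset.sum_mul]
        refine Finset.sum_congr rfl fun A _ => ?_
        rw [ite_mul, zero_mul]
    _ = ∑ s ∈ Finset.powersetCard m (Finset.univ : Finset (Fin (N + m))),
          (if s = s₀ then 1 else 0) * subEval m u x s := by
        refine Finset.sum_congr rfl fun s hs => ?_
        rw [hc s hs]
    _ = subEval m u x s₀ := by
        rw [Finset.sum_congr rfl (fun s _ => by rw [ite_mul, one_mul, zero_mul]),
          Finset.sum_ite_eq' _ s₀ _, if_pos hs₀]

lemma subEval_s0 {Λ : Type*} (m M : ℕ) (hmM : m ≤ M) (u : (Fin m → Λ) → ℝ) (x : Fin M → Λ) :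
    subEval m u x (Finset.map (Fin.castLEOrderEmb hmM).toEmbedding Finset.univ)
      = u (fun i => x (Fin.castLE hmM i)) := by
  have hcard : (Finset.map (Fin.castLEOrderEmb hmM).toEmbedding Finset.univ).card = m := by
    rw [Finset.card_map, Finset.card_univ, Fintype.card_fin]
  rw [subEval, dif_pos hcard]
  have huniq := Finset.orderEmbOfFin_unique' hcard (f := Fin.castLEOrderEmb hmM)
      (fun i => Finset.mem_map_of_mem _ (Finset.mem_univ i))
  rw [← huniq]
  rfl


section AE

variable {Λ : Type*} [MeasurableSpace Λ] (μ : Measure Λ) [SigmaFinite μ]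

lemma exists_measEquiv (K M : ℕ) (g : Fin K → Fin M) (hg : Function.Injective g) :
    ∃ Ψ : (Fin M → Λ) ≃ᵐ ((Fin K → Λ) × (Fin (M - K) → Λ)),
      (∀ x, (Ψ x).1 = fun i => x (g i)) ∧
      ∀ S : Set ((Fin K → Λ) × (Fin (M - K) → Λ)),
        (Measure.pi fun _ : Fin M => μ) (Ψ ⁻¹' S)
          = ((Measure.pi fun _ : Fin K => μ).prod (Measure.pi fun _ : Fin (M - K) => μ)) S := by
  classical
  have hKM : K ≤ M := by simpa using Fintype.card_le_of_injective g hg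
  set R : Finset (Fin M) := (Finset.univ.map ⟨g, hg⟩)ᶜ with hR
  have hRcard : R.card = M - K := by
    rw [hR, Finset.card_compl, Finset.card_map, Finset.card_univ, Fintype.card_fin,
      Fintype.card_fin]
  set h : Fin K ⊕ Fin (M - K) → Fin M := Sum.elim g (R.orderEmbOfFin hRcard) with hh
  have hinj : Function.Injective h := by
    rintro (a | a) (b | b) hab
    · exact congrArg Sum.inl (hg hab)
    · exfalso
      have hab' : g a = R.orderEmbOfFin hRcard b := hab
      have h1 : g a ∈ Finset.univ.map ⟨g, hg⟩ := by
        simp [Finset.mem_map]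
      have h2 : R.orderEmbOfFin hRcard b ∈ R := Finset.orderEmbOfFin_mem R hRcard b
      exact (Finset.mem_compl.mp h2) (hab' ▸ h1)
    · exfalso
      have hab' : R.orderEmbOfFin hRcard a = g b := hab
      have h1 : g b ∈ Finset.univ.map ⟨g, hg⟩ := by
        simp [Finset.mem_map]
      have h2 : R.orderEmbOfFin hRcard a ∈ R := Finset.orderEmbOfFin_mem R hRcard a
      exact (Finset.mem_compl.mp h2) (hab' ▸ h1)
    · exact congrArg Sum.inr ((R.orderEmbOfFin hRcard).injective hab)
  have hbij : Function.Bijective h := by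
    rw [Fintype.bijective_iff_injective_and_card]
    refine ⟨hinj, ?_⟩
    simp only [Fintype.card_sum, Fintype.card_fin]
    omega
  set e : Fin K ⊕ Fin (M - K) ≃ Fin M := Equiv.ofBijective h hbij with he
  set Ψ : (Fin M → Λ) ≃ᵐ ((Fin K → Λ) × (Fin (M - K) → Λ)) :=
    (MeasurableEquiv.piCongrLeft (fun _ : Fin M => Λ) e).symm.trans
      (MeasurableEquiv.sumPiEquivProdPi fun _ => Λ) with hΨ
  have hfst : ∀ x : Fin M → Λ, (Ψ x).1 = fun i => x (g i) := by
    intro x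
    funext i
    show (MeasurableEquiv.sumPiEquivProdPi (fun _ : Fin K ⊕ Fin (M - K) => Λ)
      ((MeasurableEquiv.piCongrLeft (fun _ : Fin M => Λ) e).symm x)).1 i = x (g i)
    have h1 : ((MeasurableEquiv.piCongrLeft (fun _ : Fin M => Λ) e).symm x)
        = fun j => x (e j) := by
      funext j
      exact Equiv.piCongrLeft_symm_apply (fun _ => Λ) e x j
    rw [h1]
    rfl
  have hmp : MeasurePreserving Ψ (Measure.pi fun _ : Fin M => μ)
      ((Measure.pi fun _ : Fin K => μ).prod (Measure.pi fun _ : Fin (M - K) => μ)) := by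
    have mp1 : MeasurePreserving (MeasurableEquiv.piCongrLeft (fun _ : Fin M => Λ) e).symm
        (Measure.pi fun _ : Fin M => μ) (Measure.pi fun _ : Fin K ⊕ Fin (M - K) => μ) :=
      (measurePreserving_piCongrLeft (fun _ : Fin M => μ) e).symm _
    have mp2 : MeasurePreserving (MeasurableEquiv.sumPiEquivProdPi
        (fun _ : Fin K ⊕ Fin (M - K) => Λ))
        (Measure.pi fun _ : Fin K ⊕ Fin (M - K) => μ)
        ((Measure.pi fun _ : Fin K => μ).prod (Measure.pi fun _ : Fin (M - K) => μ)) :=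
      measurePreserving_sumPiEquivProdPi (fun _ => μ)
    exact mp2.comp mp1
  refine ⟨Ψ, hfst, fun S => ?_⟩
  rw [← hmp.map_eq, MeasurableEquiv.map_apply]

lemma ae_comp_proj {K M : ℕ} (g : Fin K → Fin M) (hg : Function.Injective g)
    (P : (Fin K → Λ) → Prop) (h : ∀ᵐ y ∂(Measure.pi fun _ : Fin K => μ), P y) :
    ∀ᵐ x ∂(Measure.pi fun _ : Fin M => μ), P (fun i => x (g i)) := by
  obtain ⟨Ψ, hfst, hmap⟩ := exists_measEquiv μ K M g hg
  rw [ae_iff] at h ⊢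
  obtain ⟨T, hBT, hTmeas, hT0⟩ := exists_measurable_superset_of_null h
  have hsub : {x : Fin M → Λ | ¬ P fun i => x (g i)} ⊆ Ψ ⁻¹' (T ×ˢ Set.univ) := by
    intro x hx
    have : (Ψ x).1 ∈ T := by
      rw [hfst x]
      exact hBT hx
    exact Set.mem_prod.mpr ⟨this, Set.mem_univ _⟩
  refine measure_mono_null hsub ?_
  rw [hmap, Measure.prod_prod, hT0, zero_mul]

lemma ae_of_ae_comp_proj (hμ : μ ≠ 0) {K M : ℕ} (g : Fin K → Fin M)
    (hg : Function.Injective g) (P : (Fin K → Λ) → Prop)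
    (h : ∀ᵐ x ∂(Measure.pi fun _ : Fin M => μ), P (fun i => x (g i))) :
    ∀ᵐ y ∂(Measure.pi fun _ : Fin K => μ), P y := by
  obtain ⟨Ψ, hfst, hmap⟩ := exists_measEquiv μ K M g hg
  have hprod : ∀ᵐ p ∂((Measure.pi fun _ : Fin K => μ).prod
      (Measure.pi fun _ : Fin (M - K) => μ)), P p.1 := by
    rw [ae_iff] at h ⊢
    rw [← hmap]
    have hset : Ψ ⁻¹' {p : (Fin K → Λ) × (Fin (M - K) → Λ) | ¬ P p.1}
        = {x : Fin M → Λ | ¬ P fun i => x (g i)} := by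
      ext x
      simp only [Set.mem_preimage, Set.mem_setOf_eq, hfst x]
    rw [hset]
    exact h
  have hne : (Measure.pi fun _ : Fin (M - K) => μ) ≠ 0 := by
    intro h0
    have : (Measure.pi fun _ : Fin (M - K) => μ) Set.univ = 0 := by rw [h0]; rfl
    rw [Measure.pi_univ] at this
    have hμu : μ Set.univ ≠ 0 := fun hh => hμ (Measure.measure_univ_eq_zero.mp hh)
    exact hμu (by
      by_contra hne'
      exact (Finset.prod_ne_zero_iff.mpr fun _ _ => hμu) this)
  haveI : (ae (Measure.pi fun _ : Fin (M - K) => μ)).NeBot := ae_neBot.2 hne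
  have h2 := Measure.ae_ae_of_ae_prod hprod
  filter_upwards [h2] with y hy
  exact Filter.eventually_const.mp hy

end AE

/-- Theorem 3: the sequence of generalized `N`-means `U_n = G_{m,N}(u_n)` has an
a.e. finite a.e. limit `U` if and only if the kernels `u_n` have an a.e. finite
a.e. limit `u`; and in that case `U = G_{m,N}(u)` a.e. -/
theorem gmean_ae_tendsto_iff {Λ : Type*} [MeasurableSpace Λ] (μ : Measure Λ)
    [SigmaFinite μ] [μ.IsComplete] (hμ : μ ≠ 0) (m N : ℕ) (hm : 1 ≤ m) (hmN : m ≤ N)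
    (u : ℕ → (Fin m → Λ) → ℝ) :
    ((∃ U : (Fin N → Λ) → ℝ, ∀ᵐ x ∂(Measure.pi fun _ : Fin N => μ),
        Tendsto (fun n => gmean m N (u n) x) atTop (nhds (U x))) ↔
      (∃ v : (Fin m → Λ) → ℝ, ∀ᵐ y ∂(Measure.pi fun _ : Fin m => μ),
        Tendsto (fun n => u n y) atTop (nhds (v y)))) ∧
    ∀ U : (Fin N → Λ) → ℝ, ∀ v : (Fin m → Λ) → ℝ,
      (∀ᵐ x ∂(Measure.pi fun _ : Fin N => μ),
        Tendsto (fun n => gmean m N (u n) x) atTop (nhds (U x))) →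
      (∀ᵐ y ∂(Measure.pi fun _ : Fin m => μ), Tendsto (fun n => u n y) atTop (nhds (v y))) →
      U =ᵐ[Measure.pi fun _ : Fin N => μ] gmean m N v := by
  classical
  have hmM : m ≤ N + m := by omega
  -- the easy direction: a.e. convergence of the kernels implies a.e. convergence of the means
  have easy : ∀ v : (Fin m → Λ) → ℝ,
      (∀ᵐ y ∂(Measure.pi fun _ : Fin m => μ), Tendsto (fun n => u n y) atTop (nhds (v y))) →
      ∀ᵐ x ∂(Measure.pi fun _ : Fin N => μ),
        Tendsto (fun n => gmean m N (u n) x) atTop (nhds (gmean m N v x)) := by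
    intro v hv
    have hall : ∀ᵐ x ∂(Measure.pi fun _ : Fin N => μ),
        ∀ t : {t // t ∈ Finset.powersetCard m (Finset.univ : Finset (Fin N))},
          Tendsto (fun n => u n (fun i =>
              x (t.1.orderEmbOfFin (Finset.mem_powersetCard.mp t.2).2 i)))
            atTop (nhds (v (fun i =>
              x (t.1.orderEmbOfFin (Finset.mem_powersetCard.mp t.2).2 i)))) := by
      rw [ae_all_iff]
      intro t
      exact ae_comp_proj μ _ (t.1.orderEmbOfFin (Finset.mem_powersetCard.mp t.2).2).injective
        (fun y => Tendsto (fun n => u n y) atTop (nhds (v y))) hv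
    filter_upwards [hall] with x hx
    simp only [gmean]
    exact Tendsto.const_mul _ (tendsto_finset_sum _ fun t _ => hx t)
  -- the hard direction
  have hard : (∃ U : (Fin N → Λ) → ℝ, ∀ᵐ x ∂(Measure.pi fun _ : Fin N => μ),
      Tendsto (fun n => gmean m N (u n) x) atTop (nhds (U x))) →
      ∃ v : (Fin m → Λ) → ℝ, ∀ᵐ y ∂(Measure.pi fun _ : Fin m => μ),
        Tendsto (fun n => u n y) atTop (nhds (v y)) := by
    rintro ⟨U, hU⟩
    set s₀ : Finset (Fin (N + m)) :=
      Finset.map (Fin.castLEOrderEmb hmM).toEmbedding Finset.univ with hs₀def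
    have hs₀card : s₀.card = m := by
      rw [hs₀def, Finset.card_map, Finset.card_univ, Fintype.card_fin]
    have hs₀mem : s₀ ∈ Finset.powersetCard m (Finset.univ : Finset (Fin (N + m))) :=
      Finset.mem_powersetCard.mpr ⟨Finset.subset_univ _, hs₀card⟩
    obtain ⟨c, hc⟩ := exists_coeffs m N hmN s₀ hs₀card
    have pull : ∀ᵐ x ∂(Measure.pi fun _ : Fin (N + m) => μ),
        ∀ A : {A // A ∈ Finset.powersetCard N (Finset.univ : Finset (Fin (N + m)))},
          Tendsto (fun n => gmean m N (u n) (fun i =>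
              x (A.1.orderEmbOfFin (Finset.mem_powersetCard.mp A.2).2 i)))
            atTop (nhds (U (fun i =>
              x (A.1.orderEmbOfFin (Finset.mem_powersetCard.mp A.2).2 i)))) := by
      rw [ae_all_iff]
      intro A
      exact ae_comp_proj μ _ (A.1.orderEmbOfFin (Finset.mem_powersetCard.mp A.2).2).injective
        (fun y => Tendsto (fun n => gmean m N (u n) y) atTop (nhds (U y))) hU
    have conv : ∀ᵐ x ∂(Measure.pi fun _ : Fin (N + m) => μ),
        ∃ L : ℝ, Tendsto (fun n => u n (fun i => x (Fin.castLE hmM i))) atTop (nhds L) := by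
      filter_upwards [pull] with x hx
      refine ⟨∑ A ∈ (Finset.powersetCard N
          (Finset.univ : Finset (Fin (N + m)))).attach,
          ((N.choose m : ℝ) * c A.1) * U (fun i =>
            x (A.1.orderEmbOfFin (Finset.mem_powersetCard.mp A.2).2 i)), ?_⟩
      have hsum : Tendsto (fun n => ∑ A ∈ (Finset.powersetCard N
          (Finset.univ : Finset (Fin (N + m)))).attach,
          ((N.choose m : ℝ) * c A.1) * gmean m N (u n) (fun i =>
            x (A.1.orderEmbOfFin (Finset.mem_powersetCard.mp A.2).2 i)))
          atTop (nhds (∑ A ∈ (Finset.powersetCard N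
          (Finset.univ : Finset (Fin (N + m)))).attach,
          ((N.choose m : ℝ) * c A.1) * U (fun i =>
            x (A.1.orderEmbOfFin (Finset.mem_powersetCard.mp A.2).2 i)))) :=
        tendsto_finset_sum _ (fun A _ => (hx A).const_mul _)
      have heq : (fun n => ∑ A ∈ (Finset.powersetCard N
          (Finset.univ : Finset (Fin (N + m)))).attach,
          ((N.choose m : ℝ) * c A.1) * gmean m N (u n) (fun i =>
            x (A.1.orderEmbOfFin (Finset.mem_powersetCard.mp A.2).2 i)))
          = fun n => u n (fun i => x (Fin.castLE hmM i)) := by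
        funext n
        rw [gmean_extract m N hm hmN s₀ hs₀mem c hc (u n) x, hs₀def, subEval_s0]
      rwa [heq] at hsum
    have hae := ae_of_ae_comp_proj μ hμ (Fin.castLE hmM)
      (Fin.castLEOrderEmb hmM).injective
      (fun y => ∃ L : ℝ, Tendsto (fun n => u n y) atTop (nhds L)) conv
    refine ⟨fun y => if h : ∃ L : ℝ, Tendsto (fun n => u n y) atTop (nhds L)
      then h.choose else 0, ?_⟩
    filter_upwards [hae] with y hy
    rw [dif_pos hy]
    exact hy.choose_spec
  constructor
  · constructor
    · exact hard
    · rintro ⟨v, hv⟩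
      exact ⟨gmean m N v, easy v hv⟩
  · intro U v hU hv
    filter_upwards [hU, easy v hv] with x h1 h2
    exact tendsto_nhds_unique h1 h2
end

section
/- A generalized N-mean of order m has a unique kernel: if u and v are a.e. finite functions on Λ^m with G_{m,N}(u) = G_{m,N}(v) a.e. on Λ^N, then u = v a.e. on Λ^m. -/
/-!
Let `symmSum k n w x = ∑ w (x ∘ f)`, summed over the order embeddings `f : Fin k ↪o Fin n`
(the index tuples `i₁ < ⋯ < i_k`), so that `G_{k,n}(w) = binom(n,k)⁻¹ • symmSum k n w`;
write `S_{k,n}` for `symmSum k n`.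
Splitting the embeddings according to whether they hit the last index gives Pascal's rule
`S_{k+1,n+1} w (x, a) = S_{k+1,n} w x + S_{k,n} (w (·, a)) x`, and from it
`S_{k+1,n} (S_{k,k+1} g) = (n - k) • S_{k,n} g` and `S_{k,k} = id`.

We show that `S_{k,n} w = 0` a.e. forces `w = 0` a.e., by induction on `k` and then on `n ≥ k`.
If `S_{k+1,n+1} w = 0` a.e., freeze the last coordinate at a generic value `a` and put
`g = w (·, a)`. Pascal's rule and the composition formula give
`S_{k+1,n} (w + (n - k)⁻¹ • S_{k,k+1} g) = 0` a.e., so `w = -(n - k)⁻¹ • S_{k,k+1} g` a.e.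
by induction on `n`. Substituting this back, `S_{k+1,n+1} w` is a nonzero multiple of `S_{k,n+1} g`,
so `g = 0` a.e. by induction on `k`, and then `w = 0` a.e.

Only the half of Fubini's theorem passing from "a.e. on a product" to "a.e. on almost every
fibre" is used, so no measurability of the kernels is needed.
-/

open MeasureTheory Filter

noncomputable instance (k n : ℕ) : Fintype (Fin k ↪o Fin n) :=
  Fintype.ofEquiv _ Set.powersetCard.ofFinEmbEquiv.symm

theorem Fintype.card_fin_orderEmbedding (k n : ℕ) :
    Fintype.card (Fin k ↪o Fin n) = n.choose k := by
  rw [Fintype.card_congr Set.powersetCard.ofFinEmbEquiv, ← Nat.card_eq_fintype_card,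
    Set.powersetCard.card, Nat.card_eq_fintype_card, Fintype.card_fin]

namespace Fin

variable {k n : ℕ}

def snocLastOrderEmb (f : Fin k ↪o Fin n) : Fin (k + 1) ↪o Fin (n + 1) :=
  OrderEmbedding.ofStrictMono (snoc (castSucc ∘ f) (last n)) fun i j hij => by
    obtain ⟨j, rfl⟩ | rfl := j.eq_castSucc_or_eq_last
    · obtain ⟨i, rfl⟩ := i.eq_castSucc_of_ne_last (ne_last_of_lt hij)
      simpa using hij
    · obtain ⟨i, rfl⟩ := i.eq_castSucc_of_ne_last hij.ne
      simp

@[simp] theorem snocLastOrderEmb_castSucc (f : Fin k ↪o Fin n) (i : Fin k) :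
    snocLastOrderEmb f i.castSucc = (f i).castSucc :=
  snoc_castSucc (α := fun _ => Fin (n + 1)) ..

@[simp] theorem snocLastOrderEmb_last (f : Fin k ↪o Fin n) :
    snocLastOrderEmb f (last k) = last n :=
  snoc_last (α := fun _ => Fin (n + 1)) ..

def orderEmbSuccEquiv (k n : ℕ) :
    (Fin (k + 1) ↪o Fin n) ⊕ (Fin k ↪o Fin n) ≃ (Fin (k + 1) ↪o Fin (n + 1)) where
  toFun := Sum.elim (·.trans castSuccOrderEmb) snocLastOrderEmb
  invFun f :=
    if h : f (last k) = last n then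
      .inr <| OrderEmbedding.ofStrictMono
        (fun i => (f i.castSucc).castPred (h ▸ (f.strictMono (castSucc_lt_last i)).ne))
        fun i j hij => by simpa [castPred_lt_castPred_iff] using castSucc_lt_castSucc_iff.2 hij
    else
      .inl <| OrderEmbedding.ofStrictMono
        (fun i => (f i).castPred fun hi =>
          h (le_antisymm (le_last _) (hi ▸ f.monotone (le_last i))))
        fun i j hij => by simpa [castPred_lt_castPred_iff] using hij
  left_inv := by
    rintro (f | f)
    · beta_reduce
      split
      · exact absurd ‹_› (castSucc_lt_last _).ne
      · rfl
    · beta_reduce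
      split
      · congr
        ext i
        simp
      · exact absurd (snocLastOrderEmb_last f) ‹_›
  right_inv f := by
    beta_reduce
    split
    · ext i
      obtain ⟨i, rfl⟩ | rfl := i.eq_castSucc_or_eq_last
      · rw [Sum.elim_inr, snocLastOrderEmb_castSucc]; rfl
      · simp [*]
    · rfl

end Fin

section

variable {Λ : Type*}

noncomputable def symmSum (k n : ℕ) :
    ((Fin k → Λ) → ℝ) →ₗ[ℝ] (Fin n → Λ) → ℝ :=
  ∑ f : Fin k ↪o Fin n, LinearMap.funLeft ℝ ℝ (fun x : Fin n → Λ => x ∘ f)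

theorem symmSum_apply (k n : ℕ) (g : (Fin k → Λ) → ℝ) (x : Fin n → Λ) :
    symmSum k n g x = ∑ f : Fin k ↪o Fin n, g (x ∘ f) := by
  simp [symmSum, LinearMap.funLeft_apply]

theorem gmean_eq_symmSum (m N : ℕ) (u : (Fin m → Λ) → ℝ) :
    gmean m N u = (N.choose m : ℝ)⁻¹ • symmSum m N u := by
  ext x
  rw [gmean, Pi.smul_apply, smul_eq_mul, symmSum_apply, ← Finset.univ_eq_attach]
  congr 1
  exact Fintype.sum_equiv ((Equiv.subtypeEquivRight (by simp)).trans
    Set.powersetCard.ofFinEmbEquiv.symm) _ _ fun _ => rfl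

theorem symmSum_snoc (k n : ℕ) (g : (Fin (k + 1) → Λ) → ℝ) (x : Fin n → Λ) (a : Λ) :
    symmSum (k + 1) (n + 1) g (Fin.snoc x a) =
      symmSum (k + 1) n g x + symmSum k n (fun z => g (Fin.snoc z a)) x := by
  simp only [symmSum_apply, ← (Fin.orderEmbSuccEquiv k n).sum_comp, Fintype.sum_sum_type]
  congr 1 <;> refine Fintype.sum_congr _ _ fun f => congrArg g (funext fun i => ?_)
  · simp [Fin.orderEmbSuccEquiv]
  · obtain ⟨i, rfl⟩ | rfl := i.eq_castSucc_or_eq_last <;> simp [Fin.orderEmbSuccEquiv]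

theorem symmSum_const (k n : ℕ) (c : ℝ) :
    symmSum k n (fun _ : Fin k → Λ => c) = fun _ => (n.choose k : ℝ) * c := by
  ext x
  simp [symmSum_apply, Fintype.card_fin_orderEmbedding]

theorem symmSum_zero_left (n : ℕ) (g : (Fin 0 → Λ) → ℝ) :
    symmSum 0 n g = fun _ => g Fin.elim0 := by
  ext x
  simp [symmSum_apply, Subsingleton.elim _ (Fin.elim0 : Fin 0 → Λ),
    Fintype.card_fin_orderEmbedding]

theorem symmSum_of_lt {k n : ℕ} (h : n < k) (g : (Fin k → Λ) → ℝ) : symmSum k n g = 0 := by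
  have : IsEmpty (Fin k ↪o Fin n) := Fintype.card_eq_zero_iff.mp <| by
    rw [Fintype.card_fin_orderEmbedding, Nat.choose_eq_zero_of_lt h]
  ext x
  simp [symmSum_apply]

theorem symmSum_self (k : ℕ) (g : (Fin k → Λ) → ℝ) : symmSum k k g = g := by
  have : Subsingleton (Fin k ↪o Fin k) := Fintype.card_le_one_iff_subsingleton.mp <| by
    rw [Fintype.card_fin_orderEmbedding, Nat.choose_self]
  ext x
  rw [symmSum_apply, Fintype.sum_subsingleton _ (OrderIso.refl (Fin k)).toOrderEmbedding]
  rfl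

theorem symmSum_symmSum (k n : ℕ) (g : (Fin k → Λ) → ℝ) :
    symmSum (k + 1) n (symmSum k (k + 1) g) = ((n : ℝ) - k) • symmSum k n g := by
  induction k generalizing n with
  | zero => ext; simp [symmSum_zero_left, symmSum_const]
  | succ k ihk =>
    induction n generalizing g with
    | zero => simp [symmSum_of_lt]
    | succ n ihn =>
      ext x
      rw [← Fin.snoc_init_self x]
      set a := x (Fin.last n)
      have h_snoc : (fun z => symmSum (k + 1) (k + 2) g (Fin.snoc z a)) =
          g + symmSum k (k + 1) (fun z => g (Fin.snoc z a)) := by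
        ext z
        rw [symmSum_snoc, symmSum_self, Pi.add_apply]
      rw [Pi.smul_apply, symmSum_snoc, symmSum_snoc, h_snoc, map_add, ihn, ihk]
      simp only [Pi.add_apply, Pi.smul_apply, smul_eq_mul]
      push_cast
      ring

section Measure

variable [MeasurableSpace Λ] (μ : Measure Λ) [SigmaFinite μ]

theorem quasiMeasurePreserving_comp_of_injective {ι κ : Type*} [Fintype ι] [Fintype κ]
    {e : κ → ι} (he : Function.Injective e) :
    Measure.QuasiMeasurePreserving (fun x : ι → Λ => x ∘ e)
      (Measure.pi fun _ => μ) (Measure.pi fun _ => μ) := by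
  classical
  let p : ι → Prop := (· ∈ Set.range e)
  let : Fintype {i // p i} := Subtype.fintype p
  let E : κ ≃ {i // p i} := Equiv.ofInjective e he
  have hfun : (fun x : ι → Λ => x ∘ e) =
      (MeasurableEquiv.piCongrLeft (fun _ => Λ) E).symm ∘ Prod.fst ∘
        MeasurableEquiv.piEquivPiSubtypeProd (fun _ => Λ) p := rfl
  rw [hfun]
  exact ((measurePreserving_piCongrLeft (fun _ => μ) E).symm _).quasiMeasurePreserving.comp
    (Measure.quasiMeasurePreserving_fst.comp
      (measurePreserving_piEquivPiSubtypeProd _ _).quasiMeasurePreserving)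

theorem symmSum_ae_eq_zero {k n : ℕ} {w : (Fin k → Λ) → ℝ}
    (hw : w =ᵐ[Measure.pi fun _ => μ] 0) :
    symmSum k n w =ᵐ[Measure.pi fun _ => μ] 0 := by
  have h : ∀ᵐ x ∂(Measure.pi fun _ => μ), ∀ f : Fin k ↪o Fin n, w (x ∘ f) = 0 :=
    ae_all_iff.2 fun f => (quasiMeasurePreserving_comp_of_injective μ f.injective).ae hw
  filter_upwards [h] with x hx
  simp [symmSum_apply, hx]

theorem ae_ae_snoc_of_ae_pi {n : ℕ} {P : (Fin (n + 1) → Λ) → Prop}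
    (h : ∀ᵐ x ∂(Measure.pi fun _ => μ), P x) :
    ∀ᵐ a ∂μ, ∀ᵐ x ∂(Measure.pi fun _ => μ), P (Fin.snoc x a) := by
  have e := (measurePreserving_piFinSuccAbove (fun _ => μ) (Fin.last n)).symm
  filter_upwards [Measure.ae_ae_of_ae_prod (e.quasiMeasurePreserving.ae h)] with a ha
  filter_upwards [ha] with x hx
  simpa only [MeasurableEquiv.piFinSuccAbove_symm_apply, Fin.insertNthEquiv,
    Equiv.coe_fn_mk, Fin.insertNth_last'] using hx

theorem MeasureTheory.Measure.pi_ne_zero {ι : Type*} [Fintype ι] (hμ : μ ≠ 0) :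
    Measure.pi (fun _ : ι => μ) ≠ 0 := by
  rw [← Measure.measure_univ_ne_zero, Measure.pi_univ]
  exact Finset.prod_ne_zero_iff.2 fun _ _ => Measure.measure_univ_ne_zero.2 hμ

variable {μ}

theorem ae_eq_zero_of_symmSum_succ_ae_eq_zero {k n : ℕ} (hkn : k < n) (hμ : μ ≠ 0)
    (ihk : ∀ g, symmSum k (n + 1) g =ᵐ[Measure.pi fun _ => μ] 0 →
      g =ᵐ[Measure.pi fun _ => μ] 0)
    (ihn : ∀ w, symmSum (k + 1) n w =ᵐ[Measure.pi fun _ => μ] 0 →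
      w =ᵐ[Measure.pi fun _ => μ] 0)
    {w : (Fin (k + 1) → Λ) → ℝ}
    (h : symmSum (k + 1) (n + 1) w =ᵐ[Measure.pi fun _ => μ] 0) :
    w =ᵐ[Measure.pi fun _ => μ] 0 := by
  have : (ae μ).NeBot := ae_neBot.2 hμ
  obtain ⟨a, ha⟩ := (ae_ae_snoc_of_ae_pi μ h).exists
  set g : (Fin k → Λ) → ℝ := fun z => w (Fin.snoc z a)
  have hkn' : (k : ℝ) < n := Nat.cast_lt.2 hkn
  have hc : (n : ℝ) - k ≠ 0 := by linarith
  have h₁ : w + ((n : ℝ) - k)⁻¹ • symmSum k (k + 1) g =ᵐ[Measure.pi fun _ => μ] 0 :=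
    ihn _ <| by
      filter_upwards [ha] with x hx
      rw [symmSum_snoc] at hx
      simpa [symmSum_symmSum, inv_smul_smul₀ hc] using hx
  have h₂ : g =ᵐ[Measure.pi fun _ => μ] 0 := ihk _ <| by
    filter_upwards [symmSum_ae_eq_zero μ (n := n + 1) h₁, h] with x hx hw
    have hc' : (n : ℝ) + 1 - k ≠ 0 := by linarith
    simpa [symmSum_symmSum, hw, hc, hc'] using hx
  filter_upwards [h₁, symmSum_ae_eq_zero μ (n := k + 1) h₂] with x hx hg
  simpa [hg] using hx

theorem ae_eq_zero_of_symmSum_ae_eq_zero (hμ : μ ≠ 0) {k n : ℕ} (hkn : k ≤ n)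
    {w : (Fin k → Λ) → ℝ} (h : symmSum k n w =ᵐ[Measure.pi fun _ => μ] 0) :
    w =ᵐ[Measure.pi fun _ => μ] 0 := by
  induction k generalizing n with
  | zero =>
    have : (ae (Measure.pi fun _ : Fin n => μ)).NeBot := ae_neBot.2 (Measure.pi_ne_zero μ hμ)
    rw [symmSum_zero_left] at h
    obtain ⟨_, hw⟩ := h.exists
    exact .of_forall fun y => (congrArg w (Subsingleton.elim y Fin.elim0)).trans hw
  | succ k ihk =>
    induction n, hkn using Nat.le_induction generalizing w with
    | base => rwa [symmSum_self] at h
    | succ n hkn ihn =>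
      exact ae_eq_zero_of_symmSum_succ_ae_eq_zero hkn hμ (fun _ => ihk (by omega))
        (fun _ => ihn) h

end Measure

end

theorem gmean_kernel_unique_general {Λ : Type*} [MeasurableSpace Λ] (μ : Measure Λ)
    [SigmaFinite μ] (hμ : μ ≠ 0) (m N : ℕ) (hmN : m ≤ N)
    (u v : (Fin m → Λ) → ℝ)
    (h : gmean m N u =ᵐ[Measure.pi fun _ : Fin N => μ] gmean m N v) :
    u =ᵐ[Measure.pi fun _ : Fin m => μ] v := by
  have hchoose : (N.choose m : ℝ)⁻¹ ≠ 0 := by simp [Nat.choose_eq_zero_iff, hmN]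
  have hsub : symmSum m N (u - v) =ᵐ[Measure.pi fun _ => μ] 0 := by
    filter_upwards [h] with x hx
    simpa [gmean_eq_symmSum, hchoose, sub_eq_zero] using hx
  filter_upwards [ae_eq_zero_of_symmSum_ae_eq_zero hμ hmN hsub] with y hy
  exact sub_eq_zero.1 hy

/-- Corollary 4: a generalized `N`-mean of order `m` has a unique kernel:
if `G_{m,N}(u) = G_{m,N}(v)` a.e. on `Λ^N` then `u = v` a.e. on `Λ^m`. -/
theorem gmean_kernel_unique {Λ : Type*} [MeasurableSpace Λ] (μ : Measure Λ)
    [SigmaFinite μ] [μ.IsComplete] (hμ : μ ≠ 0) (m N : ℕ) (hm : 1 ≤ m) (hmN : m ≤ N)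
    (u v : (Fin m → Λ) → ℝ)
    (h : gmean m N u =ᵐ[Measure.pi fun _ : Fin N => μ] gmean m N v) :
    u =ᵐ[Measure.pi fun _ : Fin m => μ] v :=
  gmean_kernel_unique_general μ hμ m N hmN u v h
end

section
/- There exists a measurable symmetric function u on ℝ²_{>0} that is not essentially bounded below, yet the generalized 3-mean G_{2,3}(u)(x_1,x_2,x_3) = (u(x_1,x_2)+u(x_1,x_3)+u(x_2,x_3))/3 is nonnegative everywhere. -/
/-!
Partition `(0, ∞)` into the cells `Λᵢ = [eⁱ, eⁱ⁺¹)`, `i ∈ ℤ`, and let `u = |i| + |j|` on `Λᵢ × Λⱼ`,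
except `u = -|j|` on the antipodal cells `Λ₋ⱼ × Λⱼ`. Then `u = -n` on the cell `Λ₋ₙ × Λₙ` of
positive measure, so `u` is not essentially bounded below. For three indices, a case split on
which pairs are antipodal shows that the sum of the three values is nonnegative; it is tight at
`(-j, j, j)`, where it equals `-|j| - |j| + 2|j| = 0`.
-/

open MeasureTheory

def blockKernel (i j : ℤ) : ℤ :=
  if i = -j then -|j| else |i| + |j|

theorem blockKernel_comm (i j : ℤ) : blockKernel i j = blockKernel j i := by
  unfold blockKernel
  split_ifs <;> grind

theorem blockKernel_neg_left (n : ℤ) : blockKernel (-n) n = -|n| := by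
  simp [blockKernel]

theorem blockKernel_add_add_nonneg (i j k : ℤ) :
    0 ≤ blockKernel i j + blockKernel i k + blockKernel j k := by
  unfold blockKernel
  simp only [Int.abs_eq_natAbs]
  split_ifs <;> omega

theorem not_exists_ae_le_of_measure_pos {α : Type*} [MeasurableSpace α] {μ : Measure α}
    {s : Set α} {f : α → ℝ} (h : ∀ c, 0 < μ ({x | f x < c} ∩ s)) :
    ¬ ∃ c, ∀ᵐ x ∂μ.restrict s, c ≤ f x := by
  rintro ⟨c, hc⟩
  have hnull : μ.restrict s {x | f x < c} = 0 := by
    simpa only [not_le] using ae_iff.mp hc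
  exact (h c).ne' (le_antisymm (hnull ▸ Measure.le_restrict_apply s _) bot_le)

noncomputable def logIndex (x : ℝ) : ℤ := ⌊Real.log x⌋

def logCell (n : ℤ) : Set ℝ := Set.Ico (Real.exp n) (Real.exp (n + 1))

theorem measurable_logIndex : Measurable logIndex :=
  Real.measurable_log.floor

theorem logIndex_of_mem_logCell {n : ℤ} {x : ℝ} (hx : x ∈ logCell n) : logIndex x = n := by
  have hx₀ : 0 < x := (Real.exp_pos _).trans_le hx.1
  rw [logIndex, Int.floor_eq_iff, Real.le_log_iff_exp_le hx₀, Real.log_lt_iff_lt_exp hx₀]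
  exact hx

theorem logCell_subset_Ioi (n : ℤ) : logCell n ⊆ Set.Ioi 0 :=
  fun _ hx => (Real.exp_pos _).trans_le hx.1

theorem volume_logCell_pos (n : ℤ) : 0 < volume (logCell n) := by
  rw [logCell, Real.volume_Ico, ENNReal.ofReal_pos, sub_pos, Real.exp_lt_exp]
  exact lt_add_one _

noncomputable def logBlockKernel (x y : ℝ) : ℝ :=
  blockKernel (logIndex x) (logIndex y)

theorem measurable_logBlockKernel :
    Measurable (fun p : ℝ × ℝ => logBlockKernel p.1 p.2) :=
  (measurable_of_countable fun p : ℤ × ℤ => (blockKernel p.1 p.2 : ℝ)).comp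
    ((measurable_logIndex.comp measurable_fst).prodMk (measurable_logIndex.comp measurable_snd))

theorem logBlockKernel_comm (x y : ℝ) : logBlockKernel x y = logBlockKernel y x := by
  rw [logBlockKernel, logBlockKernel, blockKernel_comm]

theorem logBlockKernel_add_add_nonneg (x₁ x₂ x₃ : ℝ) :
    0 ≤ logBlockKernel x₁ x₂ + logBlockKernel x₁ x₃ + logBlockKernel x₂ x₃ := by
  unfold logBlockKernel
  exact_mod_cast blockKernel_add_add_nonneg _ _ _

theorem logBlockKernel_eq_neg_on_cell (n : ℕ) {p : ℝ × ℝ}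
    (hp : p ∈ logCell (-n) ×ˢ logCell n) : logBlockKernel p.1 p.2 = -n := by
  rw [logBlockKernel, logIndex_of_mem_logCell hp.1, logIndex_of_mem_logCell hp.2,
    blockKernel_neg_left]
  simp

theorem not_exists_ae_le_logBlockKernel :
    ¬ ∃ c : ℝ, ∀ᵐ p : ℝ × ℝ ∂(volume.restrict (Set.Ioi 0 ×ˢ Set.Ioi 0)),
      c ≤ logBlockKernel p.1 p.2 := by
  refine not_exists_ae_le_of_measure_pos fun c => ?_
  obtain ⟨n, hn⟩ := exists_nat_gt (-c)
  have hcell : logCell (-n) ×ˢ logCell n ⊆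
      {p : ℝ × ℝ | logBlockKernel p.1 p.2 < c} ∩ (Set.Ioi 0 ×ˢ Set.Ioi 0) := fun p hp =>
    ⟨by rw [Set.mem_ofPred_eq, logBlockKernel_eq_neg_on_cell n hp]; linarith,
      Set.prod_mono (logCell_subset_Ioi _) (logCell_subset_Ioi _) hp⟩
  refine lt_of_lt_of_le ?_ (measure_mono hcell)
  rw [Measure.volume_eq_prod, Measure.prod_prod]
  exact ENNReal.mul_pos (volume_logCell_pos _).ne' (volume_logCell_pos _).ne'

/-- Example 2: there is a measurable symmetric function `u` on `(0,∞)²` which is not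
essentially bounded below, yet its generalized 3-mean
`G_{2,3}(u)(x₁,x₂,x₃) = (u(x₁,x₂)+u(x₁,x₃)+u(x₂,x₃))/3` is everywhere nonnegative. -/
theorem exists_unbounded_below_kernel_with_nonneg_gmean :
    ∃ u : ℝ → ℝ → ℝ,
      Measurable (fun p : ℝ × ℝ => u p.1 p.2) ∧
      (∀ x y, u x y = u y x) ∧
      (¬ ∃ c : ℝ, ∀ᵐ p : ℝ × ℝ ∂(volume.restrict (Set.Ioi 0 ×ˢ Set.Ioi 0)),
        c ≤ u p.1 p.2) ∧
      ∀ x₁ ∈ Set.Ioi (0 : ℝ), ∀ x₂ ∈ Set.Ioi (0 : ℝ), ∀ x₃ ∈ Set.Ioi (0 : ℝ),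
        0 ≤ (u x₁ x₂ + u x₁ x₃ + u x₂ x₃) / 3 :=
  ⟨logBlockKernel, measurable_logBlockKernel, logBlockKernel_comm,
    not_exists_ae_le_logBlockKernel,
    fun x₁ _ x₂ _ x₃ _ => div_nonneg (logBlockKernel_add_add_nonneg x₁ x₂ x₃) zero_le_three⟩
end

section
/- There exist a symmetric probability density P > 0 on (0,∞)² (with respect to Lebesgue measure, up to normalization) and a measurable function u on (0,∞) such that U := G_{1,2}(u) satisfies U ∈ L^1((0,∞)²; P d²x), but u ∉ L^1((0,∞); P_{(1)} dx), where P_{(1)}(x) = ∫ P(x,y) dy. -/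
/-!
`P` and `u` are constant on the cells `Q_{ij}`. On neighbouring cells (`|i - j| = 1`) the values
of `u` cancel to `|G_{1,2}(u)| = 1`, elsewhere `|G_{1,2}(u)| ≤ i + j`; so both `P` and
`|G_{1,2}(u) P|` are at most `(i + j)^{-2}` on the band `|x - y| < 2` and at most `(i + j)^{-3}`
off it, which is integrable over the quadrant. The marginal, however, already collects
`(2i + 1)^{-2}` from the cell `Q_{i,i+1}`, so `|u P₍₁₎| ≳ 1/x` on `I_i`.
-/

open MeasureTheory Set

namespace GMeanCounterexample

noncomputable def cellKernel (i j : ℕ) : ℝ :=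
  if i + 1 = j ∨ j + 1 = i then ((i + j : ℝ))⁻¹ ^ 2 else ((i + j : ℝ))⁻¹ ^ 4

def cellValue (i : ℕ) : ℝ := 2 * (-1) ^ i * i

-- `⌈x⌉₊ = i` exactly for `x ∈ I_i = (i - 1, i]`: these are the paper's `P` and `u` on `(0, ∞)`.
noncomputable def kernel (x y : ℝ) : ℝ := cellKernel ⌈x⌉₊ ⌈y⌉₊

noncomputable def alternating (x : ℝ) : ℝ := cellValue ⌈x⌉₊

noncomputable def cellMajorant (i j : ℕ) : ℝ :=
  if i + 1 = j ∨ j + 1 = i then ((i + j : ℝ))⁻¹ ^ 2 else ((i + j : ℝ))⁻¹ ^ 3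

/- On the band, `(i + j)^{-2} ≤ 2 / (1 + y²)`, integrable along the band as a convolution
integrand; off it, `(i + j)^{-3} ≤ (1 + ‖(x, y)‖)^{-3}`, integrable on `ℝ²` as `3 > 2`. -/
noncomputable def envelope (p : ℝ × ℝ) : ℝ :=
  2 * (1 + p.2 ^ 2)⁻¹ * (Ioo (-2 : ℝ) 2).indicator (fun _ => 1) (p.1 - p.2) +
    (1 + ‖p‖) ^ (-3 : ℝ)

lemma measurable_kernel : Measurable fun p : ℝ × ℝ => kernel p.1 p.2 :=
  (measurable_of_countable fun q : ℕ × ℕ => cellKernel q.1 q.2).comp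
    ((Nat.measurable_ceil.comp measurable_fst).prodMk (Nat.measurable_ceil.comp measurable_snd))

lemma measurable_alternating : Measurable alternating :=
  (measurable_of_countable cellValue).comp Nat.measurable_ceil

lemma cellKernel_symm (i j : ℕ) : cellKernel i j = cellKernel j i := by
  simp only [cellKernel, add_comm (i : ℝ), or_comm]

lemma kernel_symm (x y : ℝ) : kernel x y = kernel y x := cellKernel_symm _ _

lemma cellKernel_pos {i j : ℕ} (h : 0 < i + j) : 0 < cellKernel i j := by
  have : (0 : ℝ) < i + j := by exact_mod_cast h
  unfold cellKernel; split <;> positivity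

lemma cellKernel_nonneg (i j : ℕ) : 0 ≤ cellKernel i j := by
  unfold cellKernel; split <;> positivity

lemma kernel_nonneg (x y : ℝ) : 0 ≤ kernel x y := cellKernel_nonneg _ _

lemma kernel_pos {x : ℝ} (hx : 0 < x) (y : ℝ) : 0 < kernel x y :=
  cellKernel_pos (Nat.add_pos_left (Nat.ceil_pos.mpr hx) _)

lemma cellKernel_le_inv_sq {i j : ℕ} (h : 0 < i + j) :
    cellKernel i j ≤ ((i + j : ℝ))⁻¹ ^ 2 := by
  have : (1 : ℝ) ≤ i + j := by exact_mod_cast h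
  unfold cellKernel; split
  · exact le_rfl
  · exact pow_le_pow_of_le_one (by positivity) (inv_le_one_of_one_le₀ this) (by norm_num)

lemma abs_cellValue (i : ℕ) : |cellValue i| = 2 * i := by
  simp [cellValue, abs_mul]

lemma abs_cellValue_add_succ (i : ℕ) : |(cellValue i + cellValue (i + 1)) / 2| = 1 := by
  have : (cellValue i + cellValue (i + 1)) / 2 = -(-1) ^ i := by
    simp only [cellValue, pow_succ]; push_cast; ring
  simp [this]

lemma cellKernel_le_cellMajorant {i j : ℕ} (h : 0 < i + j) :
    cellKernel i j ≤ cellMajorant i j := by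
  have : (1 : ℝ) ≤ i + j := by exact_mod_cast h
  unfold cellKernel cellMajorant; split
  · exact le_rfl
  · exact pow_le_pow_of_le_one (by positivity) (inv_le_one_of_one_le₀ this) (by norm_num)

lemma abs_gmean_mul_cellKernel_le_cellMajorant {i j : ℕ} (h : 0 < i + j) :
    |(cellValue i + cellValue j) / 2| * cellKernel i j ≤ cellMajorant i j := by
  have hs : (0 : ℝ) < i + j := by exact_mod_cast h
  unfold cellKernel cellMajorant
  split_ifs with hnb
  · rcases hnb with rfl | rfl
    · rw [abs_cellValue_add_succ, one_mul]
    · rw [add_comm (cellValue _), abs_cellValue_add_succ, one_mul]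
  · have hU : |(cellValue i + cellValue j) / 2| ≤ i + j := by
      rw [abs_div, abs_two, div_le_iff₀ two_pos]
      linarith [abs_add_le (cellValue i) (cellValue j), abs_cellValue i, abs_cellValue j]
    calc |(cellValue i + cellValue j) / 2| * ((i + j : ℝ))⁻¹ ^ 4
        ≤ (i + j) * ((i + j : ℝ))⁻¹ ^ 4 := by gcongr
      _ = ((i + j : ℝ))⁻¹ ^ 3 := by field_simp

lemma ceil_bounds {x : ℝ} (hx : 0 < x) :
    (1 : ℝ) ≤ ⌈x⌉₊ ∧ x ≤ ⌈x⌉₊ ∧ (⌈x⌉₊ : ℝ) < x + 1 :=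
  ⟨by exact_mod_cast Nat.ceil_pos.mpr hx, Nat.le_ceil x, Nat.ceil_lt_add_one hx.le⟩

lemma inv_add_ceil_sq_le (i : ℕ) {y : ℝ} (hy : 0 < y) :
    ((i + ⌈y⌉₊ : ℝ))⁻¹ ^ 2 ≤ 2 * (1 + y ^ 2)⁻¹ := by
  obtain ⟨hj1, hyj, -⟩ := ceil_bounds hy
  rw [inv_pow, ← div_eq_mul_inv, le_div_iff₀ (by positivity), inv_mul_le_iff₀ (by positivity)]
  have : (0 : ℝ) ≤ i := i.cast_nonneg
  nlinarith

lemma inv_add_pow_three_le {x y : ℝ} (hx : 0 < x) (hy : 0 < y) :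
    ((⌈x⌉₊ + ⌈y⌉₊ : ℝ))⁻¹ ^ 3 ≤ (1 + ‖(x, y)‖) ^ (-3 : ℝ) := by
  obtain ⟨hi1, hxi, -⟩ := ceil_bounds hx
  obtain ⟨hj1, hyj, -⟩ := ceil_bounds hy
  have hnorm : 1 + ‖(x, y)‖ ≤ ⌈x⌉₊ + ⌈y⌉₊ := by
    rw [Prod.norm_def, Real.norm_of_nonneg hx.le, Real.norm_of_nonneg hy.le]
    rcases le_total x y with h | h
    · rw [max_eq_right h]; linarith
    · rw [max_eq_left h]; linarith
  rw [show (-3 : ℝ) = -((3 : ℕ) : ℝ) by norm_num, Real.rpow_neg (by positivity),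
    Real.rpow_natCast, ← inv_pow]
  gcongr

lemma cellMajorant_le_envelope {x y : ℝ} (hx : 0 < x) (hy : 0 < y) :
    cellMajorant ⌈x⌉₊ ⌈y⌉₊ ≤ envelope (x, y) := by
  have hstrip : 0 ≤ 2 * (1 + y ^ 2)⁻¹ * (Ioo (-2 : ℝ) 2).indicator (fun _ => 1) (x - y) := by
    unfold indicator; split <;> positivity
  have hbracket : 0 ≤ (1 + ‖(x, y)‖) ^ (-3 : ℝ) := by positivity
  unfold cellMajorant envelope
  split_ifs with hnb
  · obtain ⟨-, hxi, hix⟩ := ceil_bounds hx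
    obtain ⟨-, hyj, hjy⟩ := ceil_bounds hy
    have hxy : x - y ∈ Ioo (-2 : ℝ) 2 := by
      rcases hnb with h | h <;>
      · have := congrArg (Nat.cast : ℕ → ℝ) h; push_cast at this
        constructor <;> linarith
    rw [indicator_of_mem hxy, mul_one]
    linarith [inv_add_ceil_sq_le ⌈x⌉₊ hy]
  · linarith [inv_add_pow_three_le hx hy]

lemma integrable_envelope : Integrable envelope := by
  refine Integrable.add ?_ (integrable_one_add_norm ?_)
  · have := (integrable_inv_one_add_sq.const_mul 2).convolution_integrand
      (ContinuousLinearMap.mul ℝ ℝ)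
      ((integrableOn_const (s := Ioo (-2 : ℝ) 2) (C := (1 : ℝ)) (by simp)).integrable_indicator
        measurableSet_Ioo) (μ := volume) (ν := volume)
    simpa only [ContinuousLinearMap.mul_apply', Measure.volume_eq_prod] using this
  · simp only [Module.finrank_prod, Module.finrank_self]; norm_num

lemma integrableOn_of_abs_le_envelope {F : ℝ × ℝ → ℝ} (hF : Measurable F)
    (hle : ∀ x y : ℝ, 0 < x → 0 < y → |F (x, y)| ≤ envelope (x, y)) :
    IntegrableOn F (Ioi 0 ×ˢ Ioi 0) :=
  integrable_envelope.integrableOn.mono' hF.aestronglyMeasurable <|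
    (ae_restrict_mem (measurableSet_Ioi.prod measurableSet_Ioi)).mono fun p hp =>
      hle p.1 p.2 hp.1 hp.2

lemma kernel_le_envelope {x y : ℝ} (hx : 0 < x) (hy : 0 < y) :
    |kernel x y| ≤ envelope (x, y) := by
  rw [abs_of_nonneg (kernel_nonneg x y)]
  exact (cellKernel_le_cellMajorant (Nat.add_pos_left (Nat.ceil_pos.mpr hx) _)).trans
    (cellMajorant_le_envelope hx hy)

lemma gmean_mul_kernel_le_envelope {x y : ℝ} (hx : 0 < x) (hy : 0 < y) :
    |(alternating x + alternating y) / 2 * kernel x y| ≤ envelope (x, y) := by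
  rw [abs_mul, abs_of_nonneg (kernel_nonneg x y)]
  exact (abs_gmean_mul_cellKernel_le_cellMajorant (Nat.add_pos_left (Nat.ceil_pos.mpr hx) _)).trans
    (cellMajorant_le_envelope hx hy)

lemma kernel_le_two_mul_inv_one_add_sq (x : ℝ) {y : ℝ} (hy : 0 < y) :
    kernel x y ≤ 2 * (1 + y ^ 2)⁻¹ :=
  (cellKernel_le_inv_sq (Nat.add_pos_right _ (Nat.ceil_pos.mpr hy))).trans
    (inv_add_ceil_sq_le _ hy)

lemma integrableOn_kernel_right (x : ℝ) : IntegrableOn (kernel x) (Ioi 0) :=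
  (integrable_inv_one_add_sq.const_mul 2).integrableOn.mono'
    (measurable_kernel.comp measurable_prodMk_left).aestronglyMeasurable <|
    (ae_restrict_mem measurableSet_Ioi).mono fun y hy => by
      rw [Real.norm_of_nonneg (kernel_nonneg x y)]
      exact kernel_le_two_mul_inv_one_add_sq x hy

lemma cellKernel_succ_le_integral_kernel (x : ℝ) :
    cellKernel ⌈x⌉₊ (⌈x⌉₊ + 1) ≤ ∫ y in Ioi 0, kernel x y := by
  set i := ⌈x⌉₊
  have hcell : ∀ y ∈ Ioc (i : ℝ) (i + 1), kernel x y = cellKernel i (i + 1) := by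
    intro y hy
    rw [kernel, (Nat.ceil_eq_iff (a := y) (n := i + 1) (by omega)).mpr (by push_cast; exact hy)]
  calc cellKernel i (i + 1) = ∫ y in Ioc (i : ℝ) (i + 1), kernel x y := by
        rw [setIntegral_congr_fun measurableSet_Ioc hcell, setIntegral_const,
          Real.volume_real_Ioc]
        simp
    _ ≤ ∫ y in Ioi 0, kernel x y :=
        setIntegral_mono_set (integrableOn_kernel_right x)
          ((ae_restrict_mem measurableSet_Ioi).mono fun y _ => kernel_nonneg x y)
          (Ioc_subset_Ioi_self.trans (Ioi_subset_Ioi i.cast_nonneg)).eventuallyLE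

lemma inv_le_nine_mul_abs_alternating_mul_integral {x : ℝ} (hx : 1 ≤ x) :
    x⁻¹ ≤ 9 * |alternating x * ∫ y in Ioi 0, kernel x y| := by
  obtain ⟨hi1, hxi, hix⟩ := ceil_bounds (zero_lt_one.trans_le hx)
  set i := ⌈x⌉₊
  have hcell : cellKernel i (i + 1) = ((2 * i + 1 : ℝ) ^ 2)⁻¹ := by
    simp only [cellKernel, true_or, if_true, inv_pow]; push_cast; ring
  have hmarg := cellKernel_succ_le_integral_kernel x
  rw [hcell] at hmarg
  rw [abs_mul, alternating, abs_cellValue,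
    abs_of_nonneg ((inv_nonneg.mpr (sq_nonneg _)).trans hmarg)]
  calc x⁻¹ ≤ 9 * (2 * i * ((2 * i + 1 : ℝ) ^ 2)⁻¹) := by
        field_simp
        nlinarith
    _ ≤ 9 * (2 * i * ∫ y in Ioi 0, kernel x y) := by gcongr

theorem not_integrableOn_alternating_mul_integral_kernel :
    ¬ IntegrableOn (fun x => alternating x * ∫ y in Ioi 0, kernel x y) (Ioi 0) := by
  intro h
  refine not_integrableOn_Ioi_inv (a := 1) <|
    ((h.mono_set (Ioi_subset_Ioi zero_le_one)).norm.const_mul 9).mono'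
      measurable_inv.aestronglyMeasurable ?_
  filter_upwards [ae_restrict_mem measurableSet_Ioi] with x hx
  rw [Real.norm_of_nonneg (inv_nonneg.mpr (zero_le_one.trans hx.le))]
  exact inv_le_nine_mul_abs_alternating_mul_integral hx.le

end GMeanCounterexample

open GMeanCounterexample in
/-- Example 3: there exist a symmetric density `P > 0` on `(0,∞)²` (integrable, hence a
probability density up to normalization) and a measurable `u` on `(0,∞)` such that
`U := G_{1,2}(u)` is in `L¹((0,∞)²; P d²x)` while `u ∉ L¹((0,∞); P₍₁₎ dx)`, where
`P₍₁₎(x) = ∫_{(0,∞)} P(x,y) dy`. -/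
theorem exists_gmean_integrable_kernel_not_integrable :
    ∃ P : ℝ → ℝ → ℝ, ∃ u : ℝ → ℝ,
      Measurable (fun p : ℝ × ℝ => P p.1 p.2) ∧ Measurable u ∧
      (∀ x y, P x y = P y x) ∧
      (∀ x ∈ Set.Ioi (0 : ℝ), ∀ y ∈ Set.Ioi (0 : ℝ), 0 < P x y) ∧
      IntegrableOn (fun p : ℝ × ℝ => P p.1 p.2) (Set.Ioi 0 ×ˢ Set.Ioi 0) volume ∧
      IntegrableOn (fun p : ℝ × ℝ => ((u p.1 + u p.2) / 2) * P p.1 p.2)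
        (Set.Ioi 0 ×ˢ Set.Ioi 0) volume ∧
      ¬ IntegrableOn (fun x : ℝ => u x * ∫ y in Set.Ioi (0 : ℝ), P x y)
        (Set.Ioi 0) volume :=
  ⟨kernel, alternating, measurable_kernel, measurable_alternating, kernel_symm,
    fun _ hx y _ => kernel_pos hx y,
    integrableOn_of_abs_le_envelope measurable_kernel fun _ _ hx hy => kernel_le_envelope hx hy,
    integrableOn_of_abs_le_envelope
      ((((measurable_alternating.comp measurable_fst).add
        (measurable_alternating.comp measurable_snd)).div_const 2).mul measurable_kernel)
      fun _ _ hx hy => gmean_mul_kernel_le_envelope hx hy,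
    not_integrableOn_alternating_mul_integral_kernel⟩
end

section
/- Suppose N ≥ 3 and for a.e. x_N in a subset B ⊆ Λ of positive measure there is γ(x_N) > 0 with P(·, x_N) ≥ γ(x_N) P_{(N-1)} a.e. on Λ^{N-1}. Then for a.e. x_{N-1} ∈ B, P_{(N-1)}(·, x_{N-1}) ≥ γ(x_{N-1}) P_{(N-2)} a.e. on Λ^{N-2}. -/
open MeasureTheory

/-!
For a.e. `t ∈ B`, integrate the hypothesis `γ t * P1 z ≤ P (z, t)` over the last coordinate
of `z = (y, s)`: the left side becomes `γ t * P2 y`, and by symmetry of `P` in its last two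
variables the right side `∫ P (y, s, t) ds` equals `∫ P (y, t, s) ds = P1 (y, t)`.
-/

theorem Fin.snoc_snoc_comp_swap {α : Type*} {m : ℕ} (y : Fin m → α) (s t : α) :
    (Fin.snoc (Fin.snoc y s) t : Fin (m + 2) → α) ∘
        Equiv.swap (Fin.last (m + 1)) (Fin.last m).castSucc =
      Fin.snoc (Fin.snoc y t) s := by
  funext i
  induction i using Fin.lastCases with
  | last => simp
  | cast j =>
    induction j using Fin.lastCases with
    | last => simp
    | cast k =>
      rw [Function.comp_apply, Equiv.swap_apply_of_ne_of_ne] <;>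
        simp only [Fin.snoc_castSucc, ne_eq, Fin.ext_iff, Fin.val_castSucc, Fin.val_last] <;>
        omega

namespace MeasureTheory

variable {Λ : Type*} [MeasurableSpace Λ] {m : ℕ}

noncomputable def lastMarginal (μ : Measure Λ) (f : (Fin (m + 1) → Λ) → ℝ) (y : Fin m → Λ) :
    ℝ :=
  ∫ s, f (Fin.snoc y s) ∂μ

variable {μ : Measure Λ} [SigmaFinite μ]

theorem measurePreserving_snoc :
    MeasurePreserving (fun p : (Fin m → Λ) × Λ => (Fin.snoc p.1 p.2 : Fin (m + 1) → Λ))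
      ((Measure.pi fun _ => μ).prod μ) (Measure.pi fun _ => μ) := by
  convert ((measurePreserving_piFinSuccAbove (fun _ => μ) (Fin.last m)).symm _).comp
    Measure.measurePreserving_swap using 1
  funext p
  simp [MeasurableEquiv.piFinSuccAbove_symm_apply, Fin.snocEquiv]

theorem ae_ae_snoc_of_ae {p : (Fin (m + 1) → Λ) → Prop}
    (h : ∀ᵐ z ∂Measure.pi fun _ => μ, p z) :
    ∀ᵐ y ∂Measure.pi fun _ => μ, ∀ᵐ s ∂μ, p (Fin.snoc y s) :=
  Measure.ae_ae_of_ae_prod (measurePreserving_snoc.quasiMeasurePreserving.ae h)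

namespace Integrable

variable {f : (Fin (m + 1) → Λ) → ℝ}

theorem comp_snoc (hf : Integrable f (Measure.pi fun _ => μ)) :
    Integrable (fun p : (Fin m → Λ) × Λ => f (Fin.snoc p.1 p.2))
      ((Measure.pi fun _ => μ).prod μ) :=
  measurePreserving_snoc.integrable_comp_of_integrable hf

theorem snoc_right_ae (hf : Integrable f (Measure.pi fun _ => μ)) :
    ∀ᵐ y ∂Measure.pi fun _ => μ, Integrable (fun s => f (Fin.snoc y s)) μ :=
  hf.comp_snoc.prod_right_ae

theorem snoc_left_ae (hf : Integrable f (Measure.pi fun _ => μ)) :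
    ∀ᵐ s ∂μ, Integrable (fun y => f (Fin.snoc y s)) (Measure.pi fun _ => μ) :=
  hf.comp_snoc.prod_left_ae

theorem lastMarginal (hf : Integrable f (Measure.pi fun _ => μ)) :
    Integrable (lastMarginal μ f) (Measure.pi fun _ => μ) :=
  hf.comp_snoc.integral_prod_left

end Integrable

theorem ae_mul_lastMarginal_lastMarginal_le {f : (Fin (m + 2) → Λ) → ℝ}
    (hf : Integrable f (Measure.pi fun _ => μ))
    (hsym : ∀ σ : Equiv.Perm (Fin (m + 2)), ∀ x, f (x ∘ σ) = f x) {t : Λ} {c : ℝ}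
    (hslice : Integrable (fun z => f (Fin.snoc z t)) (Measure.pi fun _ => μ))
    (hle : ∀ᵐ z ∂Measure.pi fun _ => μ, c * lastMarginal μ f z ≤ f (Fin.snoc z t)) :
    ∀ᵐ y ∂Measure.pi fun _ => μ,
      c * lastMarginal μ (lastMarginal μ f) y ≤ lastMarginal μ f (Fin.snoc y t) := by
  filter_upwards [ae_ae_snoc_of_ae hle, hf.lastMarginal.snoc_right_ae, hslice.snoc_right_ae]
    with y hy hmarg hslice_y
  have hswap (s : Λ) : f (Fin.snoc (Fin.snoc y s) t) = f (Fin.snoc (Fin.snoc y t) s) := by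
    rw [← Fin.snoc_snoc_comp_swap, hsym]
  calc c * lastMarginal μ (lastMarginal μ f) y
      = ∫ s, c * lastMarginal μ f (Fin.snoc y s) ∂μ := (integral_const_mul _ _).symm
    _ ≤ ∫ s, f (Fin.snoc (Fin.snoc y s) t) ∂μ := integral_mono_ae (hmarg.const_mul c) hslice_y hy
    _ = lastMarginal μ f (Fin.snoc y t) := by simp only [hswap, lastMarginal]

end MeasureTheory

theorem reduction_density_lower_bound_general {Λ : Type*} [MeasurableSpace Λ] (μ : Measure Λ)
    [SigmaFinite μ] (n : ℕ)
    (P : (Fin (n + 2) → Λ) → ℝ)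
    (hPsym : ∀ σ : Equiv.Perm (Fin (n + 2)), ∀ x, P (x ∘ σ) = P x)
    (hPint : Integrable P (Measure.pi fun _ : Fin (n + 2) => μ))
    (P1 : (Fin (n + 1) → Λ) → ℝ) (hP1 : ∀ y, P1 y = ∫ t, P (Fin.snoc y t) ∂μ)
    (P2 : (Fin n → Λ) → ℝ) (hP2 : ∀ y, P2 y = ∫ t, P1 (Fin.snoc y t) ∂μ)
    (B : Set Λ)
    (γ : Λ → ℝ)
    (hγ : ∀ᵐ t ∂(μ.restrict B), 0 < γ t ∧
      ∀ᵐ y ∂(Measure.pi fun _ : Fin (n + 1) => μ), γ t * P1 y ≤ P (Fin.snoc y t)) :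
    ∀ᵐ t ∂(μ.restrict B),
      ∀ᵐ y ∂(Measure.pi fun _ : Fin n => μ), γ t * P2 y ≤ P1 (Fin.snoc y t) := by
  obtain rfl : P1 = lastMarginal μ P := funext hP1
  obtain rfl : P2 = lastMarginal μ (lastMarginal μ P) := funext hP2
  filter_upwards [hγ, ae_restrict_of_ae hPint.snoc_left_ae] with t ht hslice
  exact ae_mul_lastMarginal_lastMarginal_le hPint hPsym hslice ht.2

/-- Lemma 11: let `N = n + 2 ≥ 3` and let `P` be a symmetric probability density on
`Λ^N` with `P > 0` a.e. If for a.e. `x_N` in a set `B ⊆ Λ` of positive measure there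
is `γ(x_N) > 0` with `P(·, x_N) ≥ γ(x_N) P_{(N-1)}` a.e. on `Λ^{N-1}`, then for a.e.
`x_{N-1} ∈ B`, `P_{(N-1)}(·, x_{N-1}) ≥ γ(x_{N-1}) P_{(N-2)}` a.e. on `Λ^{N-2}`. -/
theorem reduction_density_lower_bound {Λ : Type*} [MeasurableSpace Λ] (μ : Measure Λ)
    [SigmaFinite μ] [μ.IsComplete] (n : ℕ) (hn : 1 ≤ n)
    (P : (Fin (n + 2) → Λ) → ℝ) (hPmeas : Measurable P)
    (hPpos : ∀ᵐ x ∂(Measure.pi fun _ : Fin (n + 2) => μ), 0 < P x)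
    (hPsym : ∀ σ : Equiv.Perm (Fin (n + 2)), ∀ x, P (x ∘ σ) = P x)
    (hPint : Integrable P (Measure.pi fun _ : Fin (n + 2) => μ))
    (hPone : ∫ x, P x ∂(Measure.pi fun _ : Fin (n + 2) => μ) = 1)
    (P1 : (Fin (n + 1) → Λ) → ℝ) (hP1 : ∀ y, P1 y = ∫ t, P (Fin.snoc y t) ∂μ)
    (P2 : (Fin n → Λ) → ℝ) (hP2 : ∀ y, P2 y = ∫ t, P1 (Fin.snoc y t) ∂μ)
    (B : Set Λ) (hB : MeasurableSet B) (hBpos : 0 < μ B)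
    (γ : Λ → ℝ)
    (hγ : ∀ᵐ t ∂(μ.restrict B), 0 < γ t ∧
      ∀ᵐ y ∂(Measure.pi fun _ : Fin (n + 1) => μ), γ t * P1 y ≤ P (Fin.snoc y t)) :
    ∀ᵐ t ∂(μ.restrict B),
      ∀ᵐ y ∂(Measure.pi fun _ : Fin n => μ), γ t * P2 y ≤ P1 (Fin.snoc y t) :=
  reduction_density_lower_bound_general μ n P hPsym hPint P1 hP1 P2 hP2 B γ hγ
end

section
/- If N ≥ 2 and P is a symmetric probability density on Λ^N, there exists a sequence P_n of symmetric probability densities on Λ^N with P_n > 0 a.e., P_n → P in L^1(Λ^N; d^N x), and each P_n satisfying: for a.e. x_N ∈ Λ there is γ_n(x_N) > 0 with P_n(·, x_N) ≥ γ_n(x_N) (P_n)_{(N-1)} a.e. on Λ^{N-1}. -/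
/-!
Fix an everywhere positive probability density `g` on `Λ` and let `G x = ∏ i, g (x i)`.
Truncating `P` to `min P (j G)`, scaling it by `1 - 1 / (j + 1)` and adding the multiple of `G`
that restores total mass one gives a symmetric density `Q_j` squeezed between `G / (j + 1)` and
`(j + 1) G`. Because `G` is a product density, the marginal of `Q_j` in the first `N - 1`
variables is at most `(j + 1) ∏ g`, while `Q_j(·, t)` is at least `g t ∏ g / (j + 1)`; this is
condition (27). Dominated convergence of the truncations makes `Q_j → P` in `L¹`.
-/

open MeasureTheory Filter Topology

structure IsProbDensity {α : Type*} [MeasurableSpace α] (ν : Measure α) (f : α → ℝ) : Prop where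
  measurable : Measurable f
  nonneg : ∀ x, 0 ≤ f x
  integrable : Integrable f ν
  integral_eq_one : ∫ x, f x ∂ν = 1

section ProductDensity

variable {Λ : Type*} [MeasurableSpace Λ] {μ : Measure Λ} {g : Λ → ℝ}

lemma exists_pos_isProbDensity (μ : Measure Λ) [SigmaFinite μ] (hμ : μ ≠ 0) :
    ∃ g : Λ → ℝ, IsProbDensity μ g ∧ ∀ x, 0 < g x := by
  obtain ⟨g, hg_pos, hg_meas, hg_lt⟩ := exists_pos_lintegral_lt_of_sigmaFinite μ one_ne_zero
  have hg_int : Integrable (fun x => (g x : ℝ)) μ :=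
    ⟨hg_meas.coe_nnreal_real.aestronglyMeasurable, by
      simpa [HasFiniteIntegral] using hg_lt.trans ENNReal.one_lt_top⟩
  have hc : 0 < ∫ x, (g x : ℝ) ∂μ := by
    refine (integral_pos_iff_support_of_nonneg (fun x => (g x).coe_nonneg) hg_int).2 ?_
    have : Function.support (fun x => (g x : ℝ)) = Set.univ :=
      Set.eq_univ_of_forall fun x => NNReal.coe_ne_zero.2 (hg_pos x).ne'
    simpa [this, pos_iff_ne_zero] using hμ
  exact ⟨fun x => (g x : ℝ) / ∫ x, (g x : ℝ) ∂μ, ⟨hg_meas.coe_nnreal_real.div_const _, fun x => div_nonneg (g x).coe_nonneg hc.le,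
    hg_int.div_const _, by rw [integral_div, div_self hc.ne']⟩, fun x => div_pos (hg_pos x) hc⟩

lemma IsProbDensity.pi [SigmaFinite μ] {ι : Type*} [Fintype ι] (hg : IsProbDensity μ g) :
    IsProbDensity (Measure.pi fun _ : ι => μ) fun x => ∏ i, g (x i) where
  measurable := Finset.measurable_prod _ fun i _ => hg.measurable.comp (measurable_pi_apply i)
  nonneg x := Finset.prod_nonneg fun i _ => hg.nonneg _
  integrable := Integrable.fintype_prod fun _ => hg.integrable
  integral_eq_one := by simp [integral_fintype_prod_eq_prod, hg.integral_eq_one]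

lemma exists_pos_mul_integral_snoc_le {n : ℕ} (hg : IsProbDensity μ g) (hg_pos : ∀ t, 0 < g t)
    {Q : (Fin (n + 1) → Λ) → ℝ} {c C : ℝ} (hc : 0 < c) (hC : 0 < C)
    (hQ_ge : ∀ x, c * ∏ i, g (x i) ≤ Q x) (hQ_le : ∀ x, Q x ≤ C * ∏ i, g (x i)) (t : Λ) :
    ∃ γ : ℝ, 0 < γ ∧ ∀ y : Fin n → Λ, γ * ∫ s, Q (Fin.snoc y s) ∂μ ≤ Q (Fin.snoc y t) := by
  have hG_snoc (y : Fin n → Λ) (s : Λ) :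
      ∏ i, g ((Fin.snoc y s : Fin (n + 1) → Λ) i) = (∏ i, g (y i)) * g s := by
    simp [Fin.prod_univ_castSucc]
  refine ⟨c * g t / C, by have := hg_pos t; positivity, fun y => ?_⟩
  have hGy : 0 ≤ ∏ i, g (y i) := Finset.prod_nonneg fun i _ => hg.nonneg _
  have h_marginal : ∫ s, Q (Fin.snoc y s) ∂μ ≤ C * ∏ i, g (y i) := by
    calc ∫ s, Q (Fin.snoc y s) ∂μ ≤ ∫ s, (C * ∏ i, g (y i)) * g s ∂μ := by
          refine integral_mono_of_nonneg (Eventually.of_forall fun s => ?_)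
            (hg.integrable.const_mul _) (Eventually.of_forall fun s => ?_)
          · refine le_trans ?_ (hQ_ge (Fin.snoc y s))
            rw [hG_snoc]
            exact mul_nonneg hc.le (mul_nonneg hGy (hg.nonneg s))
          · simpa only [hG_snoc, mul_assoc] using hQ_le (Fin.snoc y s)
      _ = C * ∏ i, g (y i) := by rw [integral_const_mul, hg.integral_eq_one, mul_one]
  calc c * g t / C * ∫ s, Q (Fin.snoc y s) ∂μ ≤ c * g t / C * (C * ∏ i, g (y i)) := by
        have := hg_pos t
        gcongr
    _ = c * ∏ i, g ((Fin.snoc y t : Fin (n + 1) → Λ) i) := by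
        rw [hG_snoc]
        field_simp
    _ ≤ Q (Fin.snoc y t) := hQ_ge _

end ProductDensity

section Mixture

variable {α : Type*} [MeasurableSpace α] {ν : Measure α} {δ : ℝ} {T G P : α → ℝ}

/-- The combination `(1 - δ) T + b G`, where `b` tops the mass up to one when `∫ G = 1`. -/
noncomputable def mixture (ν : Measure α) (δ : ℝ) (T G : α → ℝ) (x : α) : ℝ :=
  (1 - δ) * T x + (1 - (1 - δ) * ∫ y, T y ∂ν) * G x

lemma integrable_mixture (hT : Integrable T ν) (hG : Integrable G ν) :
    Integrable (mixture ν δ T G) ν :=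
  (hT.const_mul _).add (hG.const_mul _)

lemma integral_mixture (hT : Integrable T ν) (hG : Integrable G ν) (hG_one : ∫ x, G x ∂ν = 1) :
    ∫ x, mixture ν δ T G x ∂ν = 1 := by
  simp only [mixture]
  rw [integral_add (hT.const_mul _) (hG.const_mul _), integral_const_mul, integral_const_mul,
    hG_one]
  ring

lemma mul_le_mixture (hδ : δ ≤ 1) (hT : ∀ x, 0 ≤ T x) (hT_le : ∫ x, T x ∂ν ≤ 1)
    (hG : ∀ x, 0 ≤ G x) (x : α) : δ * G x ≤ mixture ν δ T G x := by
  have : δ ≤ 1 - (1 - δ) * ∫ x, T x ∂ν := by nlinarith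
  have := mul_le_mul_of_nonneg_right this (hG x)
  have := mul_nonneg (sub_nonneg.2 hδ) (hT x)
  simp only [mixture]
  linarith

lemma mixture_le_add_one_mul {C : ℝ} (hδ₀ : 0 ≤ δ) (hδ₁ : δ ≤ 1) (hT : ∀ x, 0 ≤ T x)
    (hG : ∀ x, 0 ≤ G x) (hTC : ∀ x, T x ≤ C * G x) (x : α) :
    mixture ν δ T G x ≤ (C + 1) * G x := by
  have hb : 1 - (1 - δ) * ∫ x, T x ∂ν ≤ 1 :=
    sub_le_self _ (mul_nonneg (by linarith) (integral_nonneg hT))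
  have := mul_le_mul_of_nonneg_right hb (hG x)
  have := mul_le_mul_of_nonneg_right (sub_le_self 1 hδ₀) (hT x)
  have := hTC x
  simp only [mixture]
  nlinarith

/-- Pointwise `|Q - P| ≤ (P - (1 - δ) T) + b G`, whose integral is `2 b`. -/
lemma integral_abs_mixture_sub_le (hδ : 0 ≤ δ) (hT : ∀ x, 0 ≤ T x) (hTP : ∀ x, T x ≤ P x)
    (hT_int : Integrable T ν) (hP_int : Integrable P ν) (hP_one : ∫ x, P x ∂ν = 1)
    (hG : ∀ x, 0 ≤ G x) (hG_int : Integrable G ν) (hG_one : ∫ x, G x ∂ν = 1) :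
    ∫ x, |mixture ν δ T G x - P x| ∂ν ≤ 2 * (1 - (1 - δ) * ∫ x, T x ∂ν) := by
  set b := 1 - (1 - δ) * ∫ x, T x ∂ν
  have hb : 0 ≤ b := by
    have : ∫ x, T x ∂ν ≤ 1 := hP_one ▸ integral_mono hT_int hP_int hTP
    nlinarith [(integral_nonneg hT : 0 ≤ ∫ x, T x ∂ν)]
  have h_PT : Integrable (fun x => P x - (1 - δ) * T x) ν := hP_int.sub (hT_int.const_mul _)
  have h_dom : Integrable (fun x => P x - (1 - δ) * T x + b * G x) ν :=
    h_PT.add (hG_int.const_mul _)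
  calc ∫ x, |mixture ν δ T G x - P x| ∂ν ≤ ∫ x, (P x - (1 - δ) * T x + b * G x) ∂ν := by
        refine integral_mono (((integrable_mixture hT_int hG_int).sub hP_int).abs) h_dom
          fun x => abs_le.2 ⟨?_, ?_⟩ <;>
        · have := mul_le_mul_of_nonneg_right (sub_le_self 1 hδ) (hT x)
          have := hTP x
          have := mul_nonneg hb (hG x)
          simp only [mixture]
          linarith
    _ = 2 * b := by
        rw [integral_add h_PT (hG_int.const_mul _), integral_sub hP_int (hT_int.const_mul _),
          integral_const_mul, integral_const_mul, hP_one, hG_one]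
        ring

end Mixture

section Approximation

variable {α : Type*} [MeasurableSpace α] {ν : Measure α} {P G : α → ℝ}

noncomputable def approxDensity (ν : Measure α) (P G : α → ℝ) (j : ℕ) : α → ℝ :=
  mixture ν (1 / (j + 1)) (fun x => min (P x) (j * G x)) G

lemma min_nat_mul_nonneg (hP : IsProbDensity ν P) (hG : IsProbDensity ν G) (j : ℕ) (x : α) :
    0 ≤ min (P x) (j * G x) :=
  le_min (hP.nonneg x) (mul_nonneg j.cast_nonneg (hG.nonneg x))

lemma norm_min_nat_mul_le (hP : IsProbDensity ν P) (hG : IsProbDensity ν G) (j : ℕ) (x : α) :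
    ‖min (P x) (j * G x)‖ ≤ P x := by
  rw [Real.norm_of_nonneg (min_nat_mul_nonneg hP hG j x)]
  exact min_le_left _ _

lemma integrable_min_nat_mul (hP : IsProbDensity ν P) (hG : IsProbDensity ν G) (j : ℕ) :
    Integrable (fun x => min (P x) (j * G x)) ν :=
  hP.integrable.mono' (hP.measurable.min (hG.measurable.const_mul _)).aestronglyMeasurable
    (Eventually.of_forall (norm_min_nat_mul_le hP hG j))

lemma integral_min_nat_mul_le_one (hP : IsProbDensity ν P) (hG : IsProbDensity ν G) (j : ℕ) :
    ∫ x, min (P x) (j * G x) ∂ν ≤ 1 :=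
  hP.integral_eq_one ▸ integral_mono (integrable_min_nat_mul hP hG j) hP.integrable
    fun _ => min_le_left _ _

lemma tendsto_integral_min_nat_mul (hP : IsProbDensity ν P) (hG : IsProbDensity ν G)
    (hG_pos : ∀ x, 0 < G x) :
    Tendsto (fun j : ℕ => ∫ x, min (P x) (j * G x) ∂ν) atTop (𝓝 1) := by
  rw [← hP.integral_eq_one]
  refine tendsto_integral_of_dominated_convergence P
    (fun j => (integrable_min_nat_mul hP hG j).aestronglyMeasurable) hP.integrable
    (fun j => Eventually.of_forall (norm_min_nat_mul_le hP hG j))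
    (Eventually.of_forall fun x => tendsto_const_nhds.congr' ?_)
  filter_upwards [eventually_ge_atTop ⌈P x / G x⌉₊] with j hj
  refine (min_eq_left ?_).symm
  rw [← div_le_iff₀ (hG_pos x)]
  exact (Nat.le_ceil _).trans (by exact_mod_cast hj)

lemma one_div_mul_le_approxDensity (hP : IsProbDensity ν P) (hG : IsProbDensity ν G) (j : ℕ) (x : α) :
    1 / (j + 1) * G x ≤ approxDensity ν P G j x :=
  mul_le_mixture (div_le_one_of_le₀ (by simp) (by positivity)) (min_nat_mul_nonneg hP hG j)
    (integral_min_nat_mul_le_one hP hG j) hG.nonneg x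

lemma IsProbDensity.approxDensity (hP : IsProbDensity ν P) (hG : IsProbDensity ν G) (j : ℕ) :
    IsProbDensity ν (approxDensity ν P G j) where
  measurable := ((hP.measurable.min (hG.measurable.const_mul _)).const_mul _).add
    (hG.measurable.const_mul _)
  nonneg x := (mul_nonneg (by positivity) (hG.nonneg x)).trans (one_div_mul_le_approxDensity hP hG j x)
  integrable := integrable_mixture (integrable_min_nat_mul hP hG j) hG.integrable
  integral_eq_one :=
    integral_mixture (integrable_min_nat_mul hP hG j) hG.integrable hG.integral_eq_one

lemma approxDensity_le (hP : IsProbDensity ν P) (hG : IsProbDensity ν G) (j : ℕ) (x : α) :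
    approxDensity ν P G j x ≤ (j + 1) * G x :=
  mixture_le_add_one_mul (by positivity) (div_le_one_of_le₀ (by simp) (by positivity))
    (min_nat_mul_nonneg hP hG j) hG.nonneg (fun _ => min_le_right _ _) x

lemma approxDensity_comp {e : α → α} (hPe : ∀ x, P (e x) = P x) (hGe : ∀ x, G (e x) = G x)
    (j : ℕ) (x : α) : approxDensity ν P G j (e x) = approxDensity ν P G j x := by
  simp only [approxDensity, mixture, hPe, hGe]

lemma tendsto_integral_abs_approxDensity_sub (hP : IsProbDensity ν P) (hG : IsProbDensity ν G)
    (hG_pos : ∀ x, 0 < G x) :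
    Tendsto (fun j => ∫ x, |approxDensity ν P G j x - P x| ∂ν) atTop (𝓝 0) := by
  have h_bound : Tendsto (fun j : ℕ => 2 * (1 - (1 - 1 / (j + 1)) *
      ∫ x, min (P x) (j * G x) ∂ν)) atTop (𝓝 0) := by
    have := ((tendsto_const_nhds (x := (1 : ℝ))).sub
      tendsto_one_div_add_atTop_nhds_zero_nat).mul (tendsto_integral_min_nat_mul hP hG hG_pos)
    simpa using ((tendsto_const_nhds (x := (1 : ℝ))).sub this).const_mul 2
  refine squeeze_zero (fun j => integral_nonneg fun x => abs_nonneg _) (fun j => ?_) h_bound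
  exact integral_abs_mixture_sub_le (by positivity) (min_nat_mul_nonneg hP hG j)
    (fun _ => min_le_left _ _) (integrable_min_nat_mul hP hG j) hP.integrable
    hP.integral_eq_one hG.nonneg hG.integrable hG.integral_eq_one

end Approximation

theorem exists_approx_density_condition27_general {Λ : Type*} [MeasurableSpace Λ] (μ : Measure Λ)
    [SigmaFinite μ] (hμ : μ ≠ 0) (n : ℕ)
    (P : (Fin (n + 1) → Λ) → ℝ) (hPmeas : Measurable P) (hPnonneg : ∀ x, 0 ≤ P x)
    (hPsym : ∀ σ : Equiv.Perm (Fin (n + 1)), ∀ x, P (x ∘ σ) = P x)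
    (hPint : Integrable P (Measure.pi fun _ : Fin (n + 1) => μ))
    (hPone : ∫ x, P x ∂(Measure.pi fun _ : Fin (n + 1) => μ) = 1) :
    ∃ Q : ℕ → (Fin (n + 1) → Λ) → ℝ,
      (∀ j, Measurable (Q j) ∧
        (∀ σ : Equiv.Perm (Fin (n + 1)), ∀ x, Q j (x ∘ σ) = Q j x) ∧
        (∀ᵐ x ∂(Measure.pi fun _ : Fin (n + 1) => μ), 0 < Q j x) ∧
        Integrable (Q j) (Measure.pi fun _ : Fin (n + 1) => μ) ∧
        (∫ x, Q j x ∂(Measure.pi fun _ : Fin (n + 1) => μ)) = 1 ∧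
        (∀ᵐ t ∂μ, ∃ γ : ℝ, 0 < γ ∧
          ∀ᵐ y ∂(Measure.pi fun _ : Fin n => μ),
            γ * (∫ s, Q j (Fin.snoc y s) ∂μ) ≤ Q j (Fin.snoc y t))) ∧
      Tendsto (fun j => ∫ x, |Q j x - P x| ∂(Measure.pi fun _ : Fin (n + 1) => μ))
        atTop (nhds 0) := by
  obtain ⟨g, hg, hg_pos⟩ := exists_pos_isProbDensity μ hμ
  have hG := hg.pi (ι := Fin (n + 1))
  have hG_pos (x : Fin (n + 1) → Λ) : 0 < ∏ i, g (x i) := Finset.prod_pos fun i _ => hg_pos _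
  have hP : IsProbDensity _ P := ⟨hPmeas, hPnonneg, hPint, hPone⟩
  refine ⟨approxDensity _ P _, fun j => ?_, tendsto_integral_abs_approxDensity_sub hP hG hG_pos⟩
  have hQ := hP.approxDensity hG j
  refine ⟨hQ.measurable, fun σ x => approxDensity_comp (hPsym σ)
      (fun x => Equiv.prod_comp σ fun i => g (x i)) j x, ?_, hQ.integrable, hQ.integral_eq_one,
    Eventually.of_forall fun t => ?_⟩
  · exact Eventually.of_forall fun x =>
      (mul_pos (by positivity) (hG_pos x)).trans_le (one_div_mul_le_approxDensity hP hG j x)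
  · obtain ⟨γ, hγ, h_cond⟩ := exists_pos_mul_integral_snoc_le hg hg_pos (by positivity)
      (by positivity) (one_div_mul_le_approxDensity hP hG j) (approxDensity_le hP hG j) t
    exact ⟨γ, hγ, Eventually.of_forall h_cond⟩

/-- Theorem 14: if `N = n + 1 ≥ 2` and `P` is a symmetric probability density on `Λ^N`,
there is a sequence `Q_j` of symmetric probability densities, positive a.e., converging
to `P` in `L¹(Λ^N; d^N x)`, each satisfying condition (27): for a.e. `t ∈ Λ` there is
`γ > 0` with `Q_j(·, t) ≥ γ (Q_j)_{(N-1)}` a.e. on `Λ^{N-1}`. -/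
theorem exists_approx_density_condition27 {Λ : Type*} [MeasurableSpace Λ] (μ : Measure Λ)
    [SigmaFinite μ] [μ.IsComplete] (hμ : μ ≠ 0) (n : ℕ) (hn : 1 ≤ n)
    (P : (Fin (n + 1) → Λ) → ℝ) (hPmeas : Measurable P) (hPnonneg : ∀ x, 0 ≤ P x)
    (hPsym : ∀ σ : Equiv.Perm (Fin (n + 1)), ∀ x, P (x ∘ σ) = P x)
    (hPint : Integrable P (Measure.pi fun _ : Fin (n + 1) => μ))
    (hPone : ∫ x, P x ∂(Measure.pi fun _ : Fin (n + 1) => μ) = 1) :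
    ∃ Q : ℕ → (Fin (n + 1) → Λ) → ℝ,
      (∀ j, Measurable (Q j) ∧
        (∀ σ : Equiv.Perm (Fin (n + 1)), ∀ x, Q j (x ∘ σ) = Q j x) ∧
        (∀ᵐ x ∂(Measure.pi fun _ : Fin (n + 1) => μ), 0 < Q j x) ∧
        Integrable (Q j) (Measure.pi fun _ : Fin (n + 1) => μ) ∧
        (∫ x, Q j x ∂(Measure.pi fun _ : Fin (n + 1) => μ)) = 1 ∧
        (∀ᵐ t ∂μ, ∃ γ : ℝ, 0 < γ ∧
          ∀ᵐ y ∂(Measure.pi fun _ : Fin n => μ),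
            γ * (∫ s, Q j (Fin.snoc y s) ∂μ) ≤ Q j (Fin.snoc y t))) ∧
      Tendsto (fun j => ∫ x, |Q j x - P x| ∂(Measure.pi fun _ : Fin (n + 1) => μ))
        atTop (nhds 0) :=
  exists_approx_density_condition27_general μ hμ n P hPmeas hPnonneg hPsym hPint hPone
end
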